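/- arXiv:2311.10006 — 6 statements merged into one kernel-verified Lean document; each statement's English description precedes it below -/
import Mathlib

section
/- Let α > 0. For every Schwartz function φ on ℝ^d, the function L(φ) := e^{φ/α} - 1 is again a Schwartz function and satisfies L(φ)(x) > -1 for all x ∈ ℝ^d; moreover, the map φ ↦ e^{φ/α} - 1 is continuous from the Schwartz space S to itself. -/
open MeasureTheory Real Filter Set

noncomputable section

/-- Euclidean space `ℝ^d`. -/
abbrev Euc (d : ℕ) := EuclideanSpace ℝ (Fin d)

/-- The heat semigroup `P_t` with generator `(α/2)Δ`: for `t > 0` it is given by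
convolution with the Gaussian kernel of variance `αt`, and `P_0 f = f`. -/
def heatP (d : ℕ) (α t : ℝ) (f : Euc d → ℝ) (x : Euc d) : ℝ :=
  if t = 0 then f x
  else ∫ y : Euc d, (2 * π * α * t) ^ (-(d : ℝ) / 2) *
    Real.exp (-‖x - y‖ ^ 2 / (2 * α * t)) * f y

/-- The Laplacian of `f : ℝ^d → ℝ`, as the sum of the second partial derivatives in the
coordinate directions. -/
def lap (d : ℕ) (f : Euc d → ℝ) (x : Euc d) : ℝ :=
  ∑ i : Fin d, fderiv ℝ (fun y => fderiv ℝ f y (EuclideanSpace.single i 1)) x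
    (EuclideanSpace.single i 1)

/-- The Cole–Hopf transform `V_t φ = -α ln (P_t e^{-φ/α})`. -/
def coleHopf (d : ℕ) (α t : ℝ) (φ : Euc d → ℝ) (x : Euc d) : ℝ :=
  -α * Real.log (heatP d α t (fun y => Real.exp (-φ y / α)) x)

/-- A tempered measure: a locally finite Borel measure integrating every Schwartz function. -/
def IsTempered {d : ℕ} (μ : Measure (Euc d)) : Prop :=
  IsLocallyFiniteMeasure μ ∧ ∀ φ : SchwartzMap (Euc d) ℝ, Integrable (fun x => φ x) μ

/-- The Gaussian measure on `ℝ^d` with mean `m` and covariance `t • Id`, defined through its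
density with respect to Lebesgue measure. -/
def gaussE (d : ℕ) (m : Euc d) (t : ℝ) : Measure (Euc d) :=
  volume.withDensity fun x =>
    ENNReal.ofReal ((2 * π * t) ^ (-(d : ℝ) / 2) * Real.exp (-‖x - m‖ ^ 2 / (2 * t)))

/-- The unit cube `[0,1]^d`. -/
def unitCube (d : ℕ) : Set (Euc d) := {x | ∀ i, x i ∈ Set.Icc (0 : ℝ) 1}

/-- First-order partial derivative in direction `i`. -/
def pderivI {d : ℕ} (i : Fin d) (f : Euc d → ℝ) (x : Euc d) : ℝ :=
  fderiv ℝ f x (EuclideanSpace.single i 1)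

/-- Iterated partial derivative in direction `i`. -/
def pderivIter {d : ℕ} (i : Fin d) : ℕ → (Euc d → ℝ) → Euc d → ℝ
  | 0, f => f
  | n + 1, f => pderivI i (pderivIter i n f)

/-- The partial derivative `D^β` for a multi-index `β`. -/
def Dmulti {d : ℕ} (β : Fin d → ℕ) (f : Euc d → ℝ) : Euc d → ℝ :=
  (List.finRange d).foldr (fun i g => pderivIter i (β i) g) f

/-!
Put `L φ = exp (c φ) - 1`, with `c = α⁻¹`. Since `D (L φ) = c (L φ + 1) Dφ`, Leibniz' rule bounds
`D^{n+1} (L φ)` by the derivatives of `L φ` of order `≤ n` times those of `φ`; by induction,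
`‖D^n (L φ) x‖ ≤ C ∑_{j ≤ n} ‖D^j φ x‖` pointwise, with `C` depending only on `c`, `n` and a bound
for the first `n` derivatives of `φ`. Multiplying by `‖x‖ ^ k` gives both the decay of `L φ` and
the continuity of `L` at `0`; continuity at `ψ` follows from `L φ = L ψ + (1 + L ψ) L (φ - ψ)`.
-/

open scoped ContDiff SchwartzMap Topology

theorem Real.abs_exp_sub_one_le_mul_exp_abs (t : ℝ) : |exp t - 1| ≤ |t| * exp |t| := by
  have h := Complex.norm_exp_sub_sum_le_norm_mul_exp t 1
  simp only [Finset.range_one, Finset.sum_singleton, pow_zero, Nat.factorial_zero,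
    Nat.cast_one, div_one, pow_one, Complex.norm_real, Real.norm_eq_abs] at h
  exact_mod_cast h

theorem abs_exp_mul_sub_one_le {c R t : ℝ} (ht : |t| ≤ R) :
    |exp (c * t) - 1| ≤ |c| * exp (|c| * R) * |t| :=
  calc |exp (c * t) - 1| ≤ |c * t| * exp |c * t| := abs_exp_sub_one_le_mul_exp_abs _
    _ ≤ |c| * |t| * exp (|c| * R) := by rw [abs_mul]; gcongr
    _ = |c| * exp (|c| * R) * |t| := by ring

section Derivatives

variable {E : Type*} [NormedAddCommGroup E] [NormedSpace ℝ E]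

theorem fderiv_exp_mul_sub_one {f : E → ℝ} (hf : Differentiable ℝ f) (c : ℝ) :
    fderiv ℝ (fun y => exp (c * f y) - 1) =
      fun y => c • ((exp (c * f y) - 1) • fderiv ℝ f y + fderiv ℝ f y) := by
  ext1 y
  rw [fderiv_sub_const, (((hf y).hasFDerivAt.const_mul c).exp).fderiv]
  module

theorem norm_iteratedFDeriv_succ_exp_mul_sub_one_le {f : E → ℝ} (hf : ContDiff ℝ ∞ f)
    (c : ℝ) (n : ℕ) (x : E) :
    ‖iteratedFDeriv ℝ (n + 1) (fun y => exp (c * f y) - 1) x‖ ≤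
      |c| * (∑ i ∈ Finset.range (n + 1), (n.choose i : ℝ) *
          ‖iteratedFDeriv ℝ i (fun y => exp (c * f y) - 1) x‖ *
          ‖iteratedFDeriv ℝ (n - i + 1) f x‖ +
        ‖iteratedFDeriv ℝ (n + 1) f x‖) := by
  have hu : ContDiff ℝ ∞ fun y => exp (c * f y) - 1 :=
    ((contDiff_const.mul hf).exp).sub contDiff_const
  have hDf : ContDiff ℝ ∞ (fderiv ℝ f) := hf.fderiv_right le_rfl
  have hn : (n : WithTop ℕ∞) ≤ ∞ := by exact_mod_cast le_top
  have hv : ContDiff ℝ n fun y => (exp (c * f y) - 1) • fderiv ℝ f y :=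
    (hu.smul hDf).of_le hn
  rw [← norm_iteratedFDeriv_fderiv, fderiv_exp_mul_sub_one (hf.differentiable (by simp)),
    iteratedFDeriv_const_smul_apply' (hv.add (hDf.of_le hn)).contDiffAt,
    fun_iteratedFDeriv_add_apply hv.contDiffAt (hDf.of_le hn).contDiffAt,
    norm_smul, Real.norm_eq_abs]
  gcongr
  refine (norm_add_le _ _).trans (add_le_add ?_ norm_iteratedFDeriv_fderiv.le)
  simpa only [norm_iteratedFDeriv_fderiv] using norm_iteratedFDeriv_smul_le hu hDf x hn

theorem exists_norm_iteratedFDeriv_exp_mul_sub_one_le (c : ℝ) {R : ℝ} (hR : 0 ≤ R) (n : ℕ) :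
    ∃ C, 0 ≤ C ∧ ∀ f : E → ℝ, ContDiff ℝ ∞ f → ∀ x, (∀ i ≤ n, ‖iteratedFDeriv ℝ i f x‖ ≤ R) →
      ∀ m ≤ n, ‖iteratedFDeriv ℝ m (fun y => exp (c * f y) - 1) x‖ ≤
        C * ∑ j ∈ Finset.range (n + 1), ‖iteratedFDeriv ℝ j f x‖ := by
  induction n with
  | zero =>
    refine ⟨|c| * exp (|c| * R), by positivity, fun f _ x hbound m hm => ?_⟩
    obtain rfl : m = 0 := Nat.le_zero.mp hm
    have hfx := hbound 0 le_rfl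
    simp only [norm_iteratedFDeriv_zero, Real.norm_eq_abs, zero_add, Finset.range_one,
      Finset.sum_singleton] at hfx ⊢
    exact abs_exp_mul_sub_one_le hfx
  | succ n ih =>
    obtain ⟨C₀, hC₀, hC₀_bound⟩ := ih
    refine ⟨C₀ + |c| * (2 ^ n * C₀ * R + 1), by positivity, fun f hf x hbound m hm => ?_⟩
    set T : ℕ → ℝ := fun n => ∑ j ∈ Finset.range (n + 1), ‖iteratedFDeriv ℝ j f x‖
    have hT : T n ≤ T (n + 1) := by
      simp only [T, Finset.sum_range_succ _ (n + 1)]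
      exact le_add_of_nonneg_right (norm_nonneg _)
    have hT₀ : 0 ≤ T n := Finset.sum_nonneg fun _ _ => norm_nonneg _
    have hlow := hC₀_bound f hf x fun i hi => hbound i (hi.trans n.le_succ)
    rcases Nat.le_succ_iff.mp hm with hm | rfl
    · calc _ ≤ C₀ * T n := hlow m hm
        _ ≤ (C₀ + |c| * (2 ^ n * C₀ * R + 1)) * T (n + 1) :=
          mul_le_mul (le_add_of_nonneg_right (by positivity)) hT hT₀ (by positivity)
    have htop : ‖iteratedFDeriv ℝ (n + 1) f x‖ ≤ T (n + 1) :=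
      Finset.single_le_sum (f := fun j => ‖iteratedFDeriv ℝ j f x‖)
        (fun _ _ => norm_nonneg _) (Finset.self_mem_range_succ _)
    calc _ ≤ |c| * (∑ i ∈ Finset.range (n + 1), (n.choose i : ℝ) * (C₀ * T n) * R
          + T (n + 1)) := by
          refine (norm_iteratedFDeriv_succ_exp_mul_sub_one_le hf c n x).trans ?_
          gcongr with i hi
          · exact hlow i (Finset.mem_range_succ_iff.mp hi)
          · exact hbound _ (by omega)
      _ = |c| * (2 ^ n * C₀ * R * T n + T (n + 1)) := by
          rw [← Finset.sum_mul, ← Finset.sum_mul, ← Nat.cast_sum, Nat.sum_range_choose]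
          push_cast; ring
      _ ≤ (C₀ + |c| * (2 ^ n * C₀ * R + 1)) * T (n + 1) := by
          have : 2 ^ n * C₀ * R * T n ≤ 2 ^ n * C₀ * R * T (n + 1) := by gcongr
          nlinarith [abs_nonneg c, mul_nonneg hC₀ (hT₀.trans hT)]

end Derivatives

namespace SchwartzMap

variable {E : Type*} [NormedAddCommGroup E] [NormedSpace ℝ E]

theorem exists_pow_mul_norm_iteratedFDeriv_exp_mul_sub_one_le (c : ℝ) {R : ℝ} (hR : 0 ≤ R)
    (n : ℕ) :
    ∃ C, 0 ≤ C ∧ ∀ φ : 𝓢(E, ℝ), (∀ j ≤ n, SchwartzMap.seminorm ℝ 0 j φ ≤ R) → ∀ k x,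
      ‖x‖ ^ k * ‖iteratedFDeriv ℝ n (fun y => exp (c * φ y) - 1) x‖ ≤
        C * ∑ j ∈ Finset.range (n + 1), SchwartzMap.seminorm ℝ k j φ := by
  obtain ⟨C, hC₀, hC⟩ := exists_norm_iteratedFDeriv_exp_mul_sub_one_le (E := E) c hR n
  refine ⟨C, hC₀, fun φ hφ k x => ?_⟩
  have hbound := hC φ (φ.smooth ⊤) x
    (fun i hi => (norm_iteratedFDeriv_le_seminorm ℝ φ i x).trans (hφ i hi)) n le_rfl
  calc _ ≤ ‖x‖ ^ k * (C * ∑ j ∈ Finset.range (n + 1), ‖iteratedFDeriv ℝ j φ x‖) := by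
        gcongr
    _ = C * ∑ j ∈ Finset.range (n + 1), ‖x‖ ^ k * ‖iteratedFDeriv ℝ j φ x‖ := by
        rw [Finset.mul_sum, Finset.mul_sum, Finset.mul_sum]; ring_nf
    _ ≤ C * ∑ j ∈ Finset.range (n + 1), SchwartzMap.seminorm ℝ k j φ := by
        gcongr with j; exact le_seminorm ℝ k j φ x

def expMulSubOne (c : ℝ) (φ : 𝓢(E, ℝ)) : 𝓢(E, ℝ) where
  toFun x := exp (c * φ x) - 1
  smooth' := ((contDiff_const.mul (φ.smooth ⊤)).exp).sub contDiff_const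
  decay' k n := by
    obtain ⟨C, -, hC⟩ := exists_pow_mul_norm_iteratedFDeriv_exp_mul_sub_one_le (E := E) c
      (Finset.sum_nonneg fun j _ => apply_nonneg (SchwartzMap.seminorm ℝ 0 j) φ) n
    exact ⟨_, hC φ (fun j hj => Finset.single_le_sum (fun i _ => apply_nonneg _ φ)
      (Finset.mem_range_succ_iff.mpr hj)) k⟩

@[simp]
theorem expMulSubOne_apply (c : ℝ) (φ : 𝓢(E, ℝ)) (x : E) :
    expMulSubOne c φ x = exp (c * φ x) - 1 :=
  rfl

theorem expMulSubOne_zero (c : ℝ) : expMulSubOne c (0 : 𝓢(E, ℝ)) = 0 := by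
  ext x; simp

theorem expMulSubOne_eq_add_add_mul (c : ℝ) (φ ψ : 𝓢(E, ℝ)) :
    expMulSubOne c φ = expMulSubOne c ψ + expMulSubOne c (φ - ψ) +
      pairing (ContinuousLinearMap.mul ℝ ℝ) (expMulSubOne c ψ) (expMulSubOne c (φ - ψ)) := by
  ext x
  simp only [add_apply, sub_apply, pairing_apply_apply, ContinuousLinearMap.mul_apply',
    expMulSubOne_apply, mul_sub, exp_sub]
  field_simp
  ring

theorem continuousAt_zero_expMulSubOne (c : ℝ) :
    ContinuousAt (expMulSubOne (E := E) c) 0 := by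
  rw [ContinuousAt, expMulSubOne_zero, (schwartz_withSeminorms ℝ E ℝ).tendsto_nhds _ 0]
  rintro ⟨k, n⟩ ε hε
  obtain ⟨C, hC₀, hC⟩ := exists_pow_mul_norm_iteratedFDeriv_exp_mul_sub_one_le (E := E) c
    zero_le_one n
  have hseminorm (k j : ℕ) :
      Tendsto (SchwartzMap.seminorm ℝ k j (E := E) (F := ℝ)) (𝓝 0) (𝓝 0) :=
    ((schwartz_withSeminorms ℝ E ℝ).continuous_seminorm (k, j)).tendsto' 0 0 (map_zero _)
  have hsmall : ∀ᶠ φ in 𝓝 (0 : 𝓢(E, ℝ)), ∀ j ≤ n, SchwartzMap.seminorm ℝ 0 j φ ≤ 1 :=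
    (eventually_all_finite (finite_Iic n)).mpr fun j _ =>
      (hseminorm 0 j).eventually (ge_mem_nhds zero_lt_one)
  have hbound : Tendsto
      (fun φ : 𝓢(E, ℝ) => C * ∑ j ∈ Finset.range (n + 1), SchwartzMap.seminorm ℝ k j φ)
      (𝓝 0) (𝓝 0) := by
    simpa using (tendsto_finsetSum _ fun j _ => hseminorm k j).const_mul C
  have hL : Tendsto (fun φ => SchwartzMap.seminorm ℝ k n (expMulSubOne c φ)) (𝓝 0) (𝓝 0) :=
    squeeze_zero' (.of_forall fun _ => apply_nonneg _ _)
      (hsmall.mono fun φ hφ => seminorm_le_bound ℝ k n _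
        (mul_nonneg hC₀ (Finset.sum_nonneg fun _ _ => apply_nonneg _ _)) (hC φ hφ k)) hbound
  simpa using hL.eventually (gt_mem_nhds hε)

theorem continuous_expMulSubOne (c : ℝ) : Continuous (expMulSubOne (E := E) c) := by
  refine continuous_iff_continuousAt.mpr fun ψ => ?_
  have hdiff : Tendsto (fun φ => expMulSubOne c (φ - ψ)) (𝓝 ψ) (𝓝 0) := by
    rw [← expMulSubOne_zero c]
    exact (continuousAt_zero_expMulSubOne c).tendsto.comp
      (tendsto_sub_nhds_zero_iff.mpr tendsto_id)
  have hmul := (pairing (ContinuousLinearMap.mul ℝ ℝ) (expMulSubOne c ψ)).continuous.tendsto 0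
  rw [map_zero] at hmul
  have := ((tendsto_const_nhds (x := expMulSubOne c ψ)).add hdiff).add (hmul.comp hdiff)
  simpa [ContinuousAt, ← expMulSubOne_eq_add_add_mul] using this

end SchwartzMap

theorem statement5_general (d : ℕ) (α : ℝ) :
    ∃ L : SchwartzMap (Euc d) ℝ → SchwartzMap (Euc d) ℝ,
      (∀ φ x, L φ x = Real.exp (φ x / α) - 1) ∧
      (∀ φ x, -1 < L φ x) ∧
      Continuous L := by
  refine ⟨SchwartzMap.expMulSubOne α⁻¹, fun φ x => ?_, fun φ x => ?_,
    SchwartzMap.continuous_expMulSubOne α⁻¹⟩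
  · rw [SchwartzMap.expMulSubOne_apply, inv_mul_eq_div]
  · simpa using exp_pos (α⁻¹ * φ x)

/-- the map `L(φ) = e^{φ/α} - 1` sends the Schwartz space to itself,
takes values `> -1` pointwise, and is continuous from `S` to `S`. -/
theorem statement5 (d : ℕ) (hd : 1 ≤ d) (α : ℝ) (hα : 0 < α) :
    ∃ L : SchwartzMap (Euc d) ℝ → SchwartzMap (Euc d) ℝ,
      (∀ φ x, L φ x = Real.exp (φ x / α) - 1) ∧
      (∀ φ x, -1 < L φ x) ∧
      Continuous L :=
  statement5_general d α
end
end

section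
/- Let α > 0 and let φ be a Schwartz function on ℝ^d with φ(x) > -1 for all x ∈ ℝ^d. Then H(φ) := -α ln(1 + φ) is again a Schwartz function; moreover, if φ_n → φ in the Schwartz topology with φ_n(x) > -1 and φ(x) > -1 for all x and n, then H(φ_n) → H(φ) in the Schwartz topology. -/
open MeasureTheory Real Filter Set

noncomputable section

/-!
A Schwartz function `φ > -1` is continuous and vanishes at infinity, so `φ ≥ b` for some `b > -1`;
on `[b, ∞)` the map `t ↦ -α log (1 + t)` agrees with a smooth `g : ℝ → ℝ` with `g 0 = 0`, and
`H(φ) = g ∘ φ`. For such `g`, Faà di Bruno applied to `g (r ·) ∘ (r⁻¹ f)`, with `r` the size of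
the derivatives of `f` at the point, bounds each Schwartz seminorm of `g ∘ f` by a constant times
finitely many seminorms of `f`, as long as these stay bounded; so `f ↦ g ∘ f` maps Schwartz space
to itself and is continuous at `0`. Continuity at `φ` follows from `H(φₙ) - H(φ) = H(wₙ)` with
`wₙ = (φₙ - φ) / (1 + φ)`: since `1 / (1 + φ) - 1` is again Schwartz, multiplication by
`1 / (1 + φ)` is continuous on Schwartz space, so `wₙ → 0`.
-/

open scoped ContDiff SchwartzMap

section

variable {E F : Type*} [NormedAddCommGroup E] [NormedSpace ℝ E] [NormedAddCommGroup F]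
  [NormedSpace ℝ F]

theorem exists_forall_le_of_tendsto_cocompact_zero {X : Type*} [TopologicalSpace X]
    {f : X → ℝ} (hf : Continuous f) (hlim : Tendsto f (cocompact X) (nhds 0)) {a : ℝ}
    (ha : a < 0) (hfa : ∀ x, a < f x) : ∃ b, a < b ∧ b ≤ 0 ∧ ∀ x, b ≤ f x := by
  by_cases hneg : ∃ x₀, f x₀ < 0
  · obtain ⟨x₀, hx₀⟩ := hneg
    obtain ⟨x, hx⟩ :=
      hf.exists_forall_le' x₀ ((hlim.eventually (lt_mem_nhds hx₀)).mono fun _ => le_of_lt)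
    exact ⟨f x, hfa x, (hx x₀).trans hx₀.le, hx⟩
  · push Not at hneg
    exact ⟨0, ha, le_rfl, hneg⟩

theorem exists_contDiff_forall_lt_eqOn_Ici {a b : ℝ} (hab : a < b) :
    ∃ ρ : ℝ → ℝ, ContDiff ℝ ∞ ρ ∧ (∀ t, a < ρ t) ∧ EqOn ρ id (Ici b) := by
  obtain ⟨c, hac, hcb⟩ := exists_between hab
  refine ⟨fun t => c + (t - c) * Real.smoothTransition ((t - c) / (b - c)), by fun_prop,
    fun t => ?_, fun t ht => ?_⟩
  · dsimp only
    rcases le_or_gt t c with htc | htc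
    · rw [Real.smoothTransition.zero_of_nonpos
        (div_nonpos_of_nonpos_of_nonneg (by linarith) (by linarith))]
      linarith
    · have := Real.smoothTransition.nonneg ((t - c) / (b - c))
      nlinarith
  · have : 1 ≤ (t - c) / (b - c) := by
      rw [le_div_iff₀ (by linarith)]
      linarith [mem_Ici.1 ht]
    simp [Real.smoothTransition.one_of_one_le this]

theorem ContDiffOn.exists_contDiff_eqOn_Ici {n : ℕ∞} {G : ℝ → F} {a b : ℝ}
    (hG : ContDiffOn ℝ n G (Ioi a)) (hab : a < b) :
    ∃ g : ℝ → F, ContDiff ℝ n g ∧ EqOn g G (Ici b) := by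
  obtain ⟨ρ, hρ, hρa, hρb⟩ := exists_contDiff_forall_lt_eqOn_Ici hab
  exact ⟨G ∘ ρ, hG.comp_contDiff (hρ.of_le (by exact_mod_cast le_top)) hρa,
    fun t ht => congrArg G (hρb ht)⟩

theorem ContDiff.exists_bound_norm_iteratedFDeriv {N : WithTop ℕ∞} {g : E → F}
    (hg : ContDiff ℝ N g) {s : Set E} (hs : IsCompact s) {n : ℕ} (hn : n ≤ N) :
    ∃ M, 0 ≤ M ∧ ∀ i ≤ n, ∀ y ∈ s, ‖iteratedFDeriv ℝ i g y‖ ≤ M := by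
  have hcont : Continuous fun y => ∑ i ∈ Finset.range (n + 1), ‖iteratedFDeriv ℝ i g y‖ :=
    continuous_finsetSum _ fun i hi => (hg.continuous_iteratedFDeriv
      ((Nat.cast_le.2 (Nat.lt_succ_iff.1 (Finset.mem_range.1 hi))).trans hn)).norm
  obtain ⟨M, hM⟩ := hs.exists_bound_of_continuousOn hcont.continuousOn
  refine ⟨max M 0, le_max_right _ _, fun i hi y hy => ?_⟩
  calc ‖iteratedFDeriv ℝ i g y‖
      ≤ ∑ j ∈ Finset.range (n + 1), ‖iteratedFDeriv ℝ j g y‖ :=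
        Finset.single_le_sum (f := fun j => ‖iteratedFDeriv ℝ j g y‖) (fun j _ => norm_nonneg _)
          (Finset.mem_range.2 (Nat.lt_succ_of_le hi))
    _ ≤ M := (le_abs_self _).trans (hM y hy)
    _ ≤ max M 0 := le_max_left _ _

end

section

variable {E : Type*} [NormedAddCommGroup E] [NormedSpace ℝ E]

theorem ContDiff.exists_norm_iteratedFDeriv_comp_le_mul {g : ℝ → ℝ} {n : ℕ}
    (hg : ContDiff ℝ (n + 1) g) (hg0 : g 0 = 0) (R : ℝ) :
    ∃ K, 0 ≤ K ∧ ∀ {f : E → ℝ}, ContDiff ℝ n f → ∀ (x : E) {r : ℝ}, 0 < r → r ≤ R →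
      (∀ i ≤ n, ‖iteratedFDeriv ℝ i f x‖ ≤ r) → ‖iteratedFDeriv ℝ n (g ∘ f) x‖ ≤ K * r := by
  obtain ⟨M, hM0, hM⟩ := hg.exists_bound_norm_iteratedFDeriv (isCompact_closedBall (0 : ℝ) R)
    (n := n + 1) le_rfl
  refine ⟨n.factorial * (M * max 1 R ^ n), by positivity, fun {f} hf x r hr hrR hfx => ?_⟩
  have hfx_mem : f x ∈ Metric.closedBall (0 : ℝ) R := by
    simpa using (hfx 0 (Nat.zero_le _)).trans hrR
  -- After rescaling, `g (r ·)` has derivatives of size `O(r)` at `r⁻¹ f x` (the zeroth one by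
  -- `g 0 = 0`), while those of `r⁻¹ f` are at most `1`.
  have hscale : g ∘ f = (fun t => g (r * t)) ∘ (r⁻¹ • f) := by
    funext y
    simp [hr.ne']
  have hC : ∀ i ≤ n, ‖iteratedFDeriv ℝ i (fun t => g (r * t)) ((r⁻¹ • f) x)‖ ≤
      r * (M * max 1 R ^ n) := by
    intro i hi
    rw [norm_iteratedFDeriv_eq_norm_iteratedDeriv,
      iteratedDeriv_comp_const_mul (hg.of_le (by exact_mod_cast (by omega : i ≤ n + 1))) r]
    simp only [Pi.smul_apply, smul_eq_mul, mul_inv_cancel_left₀ hr.ne']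
    rw [norm_mul, norm_pow, Real.norm_of_nonneg hr.le,
      ← norm_iteratedFDeriv_eq_norm_iteratedDeriv]
    rcases i with _ | i
    · have hlip : ‖g (f x) - g 0‖ ≤ M * ‖f x - 0‖ :=
        (convex_closedBall (0 : ℝ) R).norm_image_sub_le_of_norm_fderiv_le
          (fun y _ => (hg.differentiable (by simp)).differentiableAt)
          (fun y hy => norm_iteratedFDeriv_one (𝕜 := ℝ) g ▸ hM 1 (by omega) y hy)
          (Metric.mem_closedBall_self (hr.le.trans hrR)) hfx_mem
      rw [hg0, sub_zero, sub_zero] at hlip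
      rw [pow_zero, one_mul, norm_iteratedFDeriv_zero]
      calc ‖g (f x)‖ ≤ M * r := hlip.trans (by gcongr; simpa using hfx 0 (Nat.zero_le _))
        _ ≤ r * (M * max 1 R ^ n) := by
          rw [mul_comm M]
          gcongr
          exact le_mul_of_one_le_right hM0 (one_le_pow₀ (le_max_left _ _))
    · have hpow : r ^ (i + 1) ≤ r * max 1 R ^ n := by
        rw [pow_succ', mul_le_mul_iff_right₀ hr]
        exact (pow_le_pow_left₀ hr.le (hrR.trans (le_max_right _ _)) i).trans
          (pow_le_pow_right₀ (le_max_left _ _) (by omega))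
      calc r ^ (i + 1) * ‖iteratedFDeriv ℝ (i + 1) g (f x)‖
          ≤ (r * max 1 R ^ n) * M := by
            gcongr
            exact hM (i + 1) (by omega) _ hfx_mem
        _ = r * (M * max 1 R ^ n) := by ring
  have hD : ∀ i, 1 ≤ i → i ≤ n → ‖iteratedFDeriv ℝ i (r⁻¹ • f) x‖ ≤ 1 ^ i := by
    intro i _ hi
    rw [iteratedFDeriv_const_smul_apply ((hf.of_le (by exact_mod_cast hi)).contDiffAt),
      norm_smul, one_pow, norm_inv, Real.norm_of_nonneg hr.le]
    exact inv_mul_le_one_of_le₀ (hfx i hi) hr.le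
  have hcomp := norm_iteratedFDeriv_comp_le
    ((hg.of_le (by exact_mod_cast n.le_succ)).comp (contDiff_const.mul contDiff_id))
    (hf.const_smul r⁻¹) le_rfl x hC hD
  rw [hscale]
  calc _ ≤ _ := hcomp
    _ = n.factorial * (M * max 1 R ^ n) * r := by ring

end

namespace SchwartzMap

variable {E : Type*} [NormedAddCommGroup E] [NormedSpace ℝ E]

theorem exists_norm_pow_mul_iteratedFDeriv_comp_le {g : ℝ → ℝ} {n : ℕ}
    (hg : ContDiff ℝ (n + 1) g) (hg0 : g 0 = 0) (k : ℕ) (R : ℝ) :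
    ∃ K, 0 ≤ K ∧ ∀ f : 𝓢(E, ℝ), (Finset.Iic (k, n)).sup (schwartzSeminormFamily ℝ E ℝ) f ≤ R →
      ∀ x, ‖x‖ ^ k * ‖iteratedFDeriv ℝ n (g ∘ f) x‖ ≤
        K * (Finset.Iic (k, n)).sup (schwartzSeminormFamily ℝ E ℝ) f := by
  obtain ⟨K, hK0, hK⟩ := hg.exists_norm_iteratedFDeriv_comp_le_mul (E := E) hg0 (2 ^ k * R)
  refine ⟨2 ^ k * K, by positivity, fun f hfR x => ?_⟩
  set T := (Finset.Iic (k, n)).sup (schwartzSeminormFamily ℝ E ℝ) f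
  have hbound : ∀ i ≤ n, ∀ y, (1 + ‖y‖) ^ k * ‖iteratedFDeriv ℝ i f y‖ ≤ 2 ^ k * T :=
    fun i hi y => one_add_le_sup_seminorm_apply (𝕜 := ℝ) (m := (k, n)) le_rfl hi f y
  rcases (apply_nonneg _ f : 0 ≤ T).eq_or_lt with hT | hT
  · replace hT : T = 0 := hT.symm
    have hf : g ∘ f = 0 := by
      funext y
      have := hbound 0 (Nat.zero_le n) y
      rw [hT, mul_zero, norm_iteratedFDeriv_zero] at this
      simp [norm_le_zero_iff.1 (nonpos_of_mul_nonpos_right this (by positivity)), hg0]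
    simp [hf, hT]
  · have hP : 0 < (1 + ‖x‖) ^ k := by positivity
    have hr : 2 ^ k * T / (1 + ‖x‖) ^ k ≤ 2 ^ k * R :=
      (div_le_self (by positivity) (one_le_pow₀ (by simp))).trans (by gcongr)
    have := hK (f.smooth n) x (by positivity) hr
      (fun i hi => by rw [le_div_iff₀ hP, mul_comm]; exact hbound i hi x)
    calc ‖x‖ ^ k * ‖iteratedFDeriv ℝ n (g ∘ f) x‖
        ≤ (1 + ‖x‖) ^ k * (K * (2 ^ k * T / (1 + ‖x‖) ^ k)) := by
          gcongr
          simp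
      _ = 2 ^ k * K * T := by field_simp

def compLeft {g : ℝ → ℝ} (hg : ContDiff ℝ ∞ g) (hg0 : g 0 = 0) (f : 𝓢(E, ℝ)) : 𝓢(E, ℝ) where
  toFun := g ∘ f
  smooth' := hg.comp f.smooth'
  decay' k n := by
    obtain ⟨K, -, hK⟩ := exists_norm_pow_mul_iteratedFDeriv_comp_le (E := E)
      (hg.of_le (by exact_mod_cast le_top)) hg0 k
      ((Finset.Iic (k, n)).sup (schwartzSeminormFamily ℝ E ℝ) f)
    exact ⟨_, hK f le_rfl⟩

@[simp]
theorem compLeft_apply {g : ℝ → ℝ} (hg : ContDiff ℝ ∞ g) (hg0 : g 0 = 0) (f : 𝓢(E, ℝ))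
    (x : E) : compLeft hg hg0 f x = g (f x) :=
  rfl

theorem tendsto_compLeft_zero {ι : Type*} {l : Filter ι} {g : ℝ → ℝ} (hg : ContDiff ℝ ∞ g)
    (hg0 : g 0 = 0) {f : ι → 𝓢(E, ℝ)} (hf : Tendsto f l (nhds 0)) :
    Tendsto (fun i => compLeft hg hg0 (f i)) l (nhds 0) := by
  rw [(schwartz_withSeminorms ℝ E ℝ).tendsto_nhds _ 0]
  rintro ⟨k, n⟩ ε hε
  obtain ⟨K, hK0, hK⟩ := exists_norm_pow_mul_iteratedFDeriv_comp_le (E := E) (n := n)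
    (hg.of_le (by exact_mod_cast le_top)) hg0 k 1
  have hsmall := ((schwartz_withSeminorms ℝ E ℝ).tendsto_nhds' f 0).1 hf (Finset.Iic (k, n))
    (min 1 (ε / (K + 1))) (by positivity)
  filter_upwards [hsmall] with i hi
  rw [sub_zero] at hi ⊢
  calc schwartzSeminormFamily ℝ E ℝ (k, n) (compLeft hg hg0 (f i))
      ≤ K * (Finset.Iic (k, n)).sup (schwartzSeminormFamily ℝ E ℝ) (f i) :=
        seminorm_le_bound ℝ k n _ (by positivity) (hK (f i) (hi.le.trans (min_le_left _ _)))
    _ ≤ K * (ε / (K + 1)) := by gcongr; exact hi.le.trans (min_le_right _ _)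
    _ < ε := by
        rw [mul_div_assoc', div_lt_iff₀ (by positivity)]
        nlinarith

theorem exists_comp_of_contDiffOn [ProperSpace E] {a : ℝ} (ha : a < 0) {G : ℝ → ℝ}
    (hG : ContDiffOn ℝ ∞ G (Ioi a)) (hG0 : G 0 = 0) (φ : 𝓢(E, ℝ)) (hφ : ∀ x, a < φ x) :
    ∃ ψ : 𝓢(E, ℝ), ∀ x, ψ x = G (φ x) := by
  obtain ⟨b, hab, hb0, hbφ⟩ := exists_forall_le_of_tendsto_cocompact_zero φ.continuous
    φ.tendsto_cocompact ha hφ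
  obtain ⟨g, hg, hgG⟩ := hG.exists_contDiff_eqOn_Ici hab
  have hg0 : g 0 = 0 := (hgG (mem_Ici.2 hb0)).trans hG0
  exact ⟨compLeft hg hg0 φ, fun x => hgG (hbφ x)⟩

theorem exists_tendsto_zero_div_one_add [ProperSpace E] {φ : 𝓢(E, ℝ)} (hφ : ∀ x, -1 < φ x)
    {ι : Type*} {l : Filter ι} {φs : ι → 𝓢(E, ℝ)} (h : Tendsto φs l (nhds φ)) :
    ∃ w : ι → 𝓢(E, ℝ), Tendsto w l (nhds 0) ∧ ∀ i x, w i x = (φs i x - φ x) / (1 + φ x) := by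
  obtain ⟨u, hu⟩ := exists_comp_of_contDiffOn (G := fun t : ℝ => (1 + t)⁻¹ - 1) (by norm_num)
    (((contDiffOn_const.add contDiffOn_id).inv fun t ht => by
      simp only [id]; linarith [mem_Ioi.1 ht]).sub contDiffOn_const) (by simp) φ hφ
  have hu_temp : (fun x => 1 + u x).HasTemperateGrowth := by fun_prop
  set L := smulLeftCLM ℝ (fun x => 1 + u x)
  refine ⟨fun i => L (φs i - φ), ?_, fun i x => ?_⟩
  · have := (L.continuous.tendsto 0).comp (tendsto_sub_nhds_zero_iff.2 h)
    rwa [map_zero] at this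
  · rw [smulLeftCLM_apply_apply hu_temp, smul_eq_mul, hu, sub_apply]
    ring

theorem eventually_forall_norm_lt_of_tendsto_zero {F : Type*} [NormedAddCommGroup F]
    [NormedSpace ℝ F] {ι : Type*} {l : Filter ι} {f : ι → 𝓢(E, F)} (hf : Tendsto f l (nhds 0))
    {ε : ℝ} (hε : 0 < ε) : ∀ᶠ i in l, ∀ x, ‖f i x‖ < ε := by
  filter_upwards [((schwartz_withSeminorms ℝ E F).tendsto_nhds f 0).1 hf (0, 0) ε hε] with i hi x
  exact (norm_le_seminorm ℝ (f i) x).trans_lt (by simpa using hi)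

end SchwartzMap

theorem statement6_general (d : ℕ) (α : ℝ) :
    (∀ φ : SchwartzMap (Euc d) ℝ, (∀ x, -1 < φ x) →
      ∃ ψ : SchwartzMap (Euc d) ℝ, ∀ x, ψ x = -α * Real.log (1 + φ x)) ∧
    (∀ (φ : SchwartzMap (Euc d) ℝ) (φn : ℕ → SchwartzMap (Euc d) ℝ),
      (∀ x, -1 < φ x) → (∀ n x, -1 < φn n x) →
      ∀ (ψ : SchwartzMap (Euc d) ℝ) (ψn : ℕ → SchwartzMap (Euc d) ℝ),
      (∀ x, ψ x = -α * Real.log (1 + φ x)) →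
      (∀ n x, ψn n x = -α * Real.log (1 + φn n x)) →
      Tendsto φn atTop (nhds φ) →
      Tendsto ψn atTop (nhds ψ)) := by
  have hlog : ContDiffOn ℝ ∞ (fun t : ℝ => -α * Real.log (1 + t)) (Ioi (-1)) :=
    contDiffOn_const.mul ((contDiffOn_const.add contDiffOn_id).log fun t ht => by
      simp only [id]; linarith [mem_Ioi.1 ht])
  refine ⟨fun φ hφ => SchwartzMap.exists_comp_of_contDiffOn (by norm_num) hlog (by simp) φ hφ,
    fun φ φn hφ hφn ψ ψn hψ hψn hconv => ?_⟩
  obtain ⟨w, hw, hw_apply⟩ := SchwartzMap.exists_tendsto_zero_div_one_add hφ hconv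
  obtain ⟨g, hg, hgG⟩ := hlog.exists_contDiff_eqOn_Ici (show (-1 : ℝ) < -1 / 2 by norm_num)
  have hg0 : g 0 = 0 := by simpa using hgG (show (0 : ℝ) ∈ Ici (-1 / 2) by norm_num)
  have heq : ∀ᶠ n in atTop, SchwartzMap.compLeft hg hg0 (w n) = ψn n - ψ := by
    filter_upwards [SchwartzMap.eventually_forall_norm_lt_of_tendsto_zero hw
      (show (0 : ℝ) < 1 / 2 by norm_num)] with n hn
    ext x
    have h1 : 0 < 1 + φ x := by linarith [hφ x]
    have h2 : 0 < 1 + φn n x := by linarith [hφn n x]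
    have hquot : 1 + w n x = (1 + φn n x) / (1 + φ x) := by
      rw [hw_apply]
      field_simp
      ring
    have hw_ge : -1 / 2 ≤ w n x := by linarith [neg_abs_le (w n x), Real.norm_eq_abs (w n x), hn x]
    rw [SchwartzMap.compLeft_apply, hgG hw_ge, sub_apply, hψn, hψ]
    dsimp only
    rw [hquot, Real.log_div h2.ne' h1.ne']
    ring
  exact tendsto_sub_nhds_zero_iff.1 ((SchwartzMap.tendsto_compLeft_zero hg hg0 hw).congr' heq)

/-- if `φ` is Schwartz with `φ > -1` pointwise, then `H(φ) = -α ln(1+φ)` is again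
Schwartz; moreover `H` is sequentially continuous on this set in the Schwartz topology. -/
theorem statement6 (d : ℕ) (hd : 1 ≤ d) (α : ℝ) (hα : 0 < α) :
    (∀ φ : SchwartzMap (Euc d) ℝ, (∀ x, -1 < φ x) →
      ∃ ψ : SchwartzMap (Euc d) ℝ, ∀ x, ψ x = -α * Real.log (1 + φ x)) ∧
    (∀ (φ : SchwartzMap (Euc d) ℝ) (φn : ℕ → SchwartzMap (Euc d) ℝ),
      (∀ x, -1 < φ x) → (∀ n x, -1 < φn n x) →
      ∀ (ψ : SchwartzMap (Euc d) ℝ) (ψn : ℕ → SchwartzMap (Euc d) ℝ),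
      (∀ x, ψ x = -α * Real.log (1 + φ x)) →
      (∀ n x, ψn n x = -α * Real.log (1 + φn n x)) →
      Tendsto φn atTop (nhds φ) →
      Tendsto ψn atTop (nhds ψ)) :=
  statement6_general d α
end
end

section
/- Let φ be a smooth compactly supported function on ℝ^d, let T > 0, and let β be a multi-index. Then there exists a constant C > 0 such that |D^β (P_t φ)(x)| ≤ C e^{-|x|} for all t ∈ [0,T] and all x ∈ ℝ^d. -/
open MeasureTheory Real Filter Set

noncomputable section

/-! On test functions `D^β` commutes with the convolution `P_t`, so `D^β P_t φ = P_t (D^β φ)` and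
it suffices to bound `P_t ψ` for a continuous compactly supported `ψ`, which satisfies
`|ψ y| ≤ M e^{-|y|}`. Since `e^{-|y|} ≤ e^{-|x|} e^{|x-y|}`, the weight passes onto the Gaussian
kernel `p_t`, and by AM-GM, `|z| ≤ |z|²/(4αt) + αt`, we get `p_t(z) e^{|z|} ≤ e^{αT} 2^{d/2} p_{2t}(z)`
for `0 < t ≤ T`; integrating `p_{2t}` gives `1`. -/

open scoped Convolution

def heatKernel (d : ℕ) (α t : ℝ) (z : Euc d) : ℝ :=
  (2 * π * α * t) ^ (-(d : ℝ) / 2) * Real.exp (-‖z‖ ^ 2 / (2 * α * t))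

lemma heatP_zero {d : ℕ} {α : ℝ} (ψ : Euc d → ℝ) : heatP d α 0 ψ = ψ :=
  funext fun _ => if_pos rfl

lemma heatP_eq_integral {d : ℕ} {α t : ℝ} (ht : t ≠ 0) (ψ : Euc d → ℝ) (x : Euc d) :
    heatP d α t ψ x = ∫ y, heatKernel d α t (x - y) * ψ y := by
  rw [heatP, if_neg ht]; rfl

lemma heatP_eq_convolution {d : ℕ} {α t : ℝ} (ht : t ≠ 0) (ψ : Euc d → ℝ) :
    heatP d α t ψ = ψ ⋆[ContinuousLinearMap.mul ℝ ℝ] heatKernel d α t := by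
  ext x
  simp only [heatP_eq_integral ht, convolution_def, ContinuousLinearMap.mul_apply', mul_comm]

lemma continuous_heatKernel (d : ℕ) (α t : ℝ) : Continuous (heatKernel d α t) := by
  unfold heatKernel; fun_prop

lemma heatKernel_nonneg {d : ℕ} {α t : ℝ} (hα : 0 < α) (ht : 0 < t) (z : Euc d) :
    0 ≤ heatKernel d α t z := by
  unfold heatKernel; positivity

lemma integral_heatKernel {d : ℕ} {α t : ℝ} (hα : 0 < α) (ht : 0 < t) :
    ∫ z, heatKernel d α t z = 1 := by
  have hb : 0 < (2 * α * t)⁻¹ := by positivity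
  have hexp : ∀ z : Euc d, -‖z‖ ^ 2 / (2 * α * t) = -(2 * α * t)⁻¹ * ‖z‖ ^ 2 := fun z => by
    ring
  simp only [heatKernel, hexp, integral_const_mul,
    GaussianFourier.integral_rexp_neg_mul_sq_norm hb, finrank_euclideanSpace_fin]
  rw [div_inv_eq_mul, show π * (2 * α * t) = 2 * π * α * t by ring,
    ← Real.rpow_add (by positivity), neg_div, neg_add_cancel, Real.rpow_zero]

lemma integrable_heatKernel {d : ℕ} {α t : ℝ} (hα : 0 < α) (ht : 0 < t) :
    Integrable (heatKernel d α t) :=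
  .of_integral_ne_zero <| (integral_heatKernel hα ht).symm ▸ one_ne_zero

lemma heatKernel_mul_exp_norm_le {d : ℕ} {α t T : ℝ} (hα : 0 < α) (ht : 0 < t) (htT : t ≤ T)
    (z : Euc d) :
    heatKernel d α t z * Real.exp ‖z‖ ≤
      Real.exp (α * T) * 2 ^ ((d : ℝ) / 2) * heatKernel d α (2 * t) z := by
  have hαt : 0 < α * t := mul_pos hα ht
  have hamgm : ‖z‖ ≤ ‖z‖ ^ 2 / (4 * (α * t)) + α * t := by
    rw [div_add' _ _ _ (by positivity), le_div_iff₀ (by positivity)]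
    nlinarith [sq_nonneg (‖z‖ - 2 * (α * t))]
  have hexponent : -‖z‖ ^ 2 / (2 * α * t) + ‖z‖ ≤ α * T + -‖z‖ ^ 2 / (2 * α * (2 * t)) := by
    have hαtT : α * t ≤ α * T := mul_le_mul_of_nonneg_left htT hα.le
    have hhalve : -‖z‖ ^ 2 / (2 * α * t) + ‖z‖ ^ 2 / (4 * (α * t)) =
        -‖z‖ ^ 2 / (2 * α * (2 * t)) := by
      field_simp; ring
    linarith
  have hprefactor : (2 * π * α * t) ^ (-(d : ℝ) / 2) =
      2 ^ ((d : ℝ) / 2) * (2 * π * α * (2 * t)) ^ (-(d : ℝ) / 2) := by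
    rw [show 2 * π * α * (2 * t) = 2 * (2 * π * α * t) by ring,
      Real.mul_rpow zero_le_two (by positivity), ← mul_assoc, ← Real.rpow_add zero_lt_two,
      neg_div, add_neg_cancel, Real.rpow_zero, one_mul]
  calc heatKernel d α t z * Real.exp ‖z‖
      = (2 * π * α * t) ^ (-(d : ℝ) / 2) * Real.exp (-‖z‖ ^ 2 / (2 * α * t) + ‖z‖) := by
        rw [heatKernel, Real.exp_add, mul_assoc]
    _ ≤ (2 * π * α * t) ^ (-(d : ℝ) / 2) *
          Real.exp (α * T + -‖z‖ ^ 2 / (2 * α * (2 * t))) := by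
        gcongr
    _ = Real.exp (α * T) * 2 ^ ((d : ℝ) / 2) * heatKernel d α (2 * t) z := by
        rw [heatKernel, hprefactor, Real.exp_add]; ring

lemma abs_heatP_le_of_abs_le_mul_exp {d : ℕ} {α t T M : ℝ} (hα : 0 < α) (ht : 0 ≤ t)
    (htT : t ≤ T) {ψ : Euc d → ℝ} (hψ : ∀ y, |ψ y| ≤ M * Real.exp (-‖y‖)) (x : Euc d) :
    |heatP d α t ψ x| ≤ M * (Real.exp (α * T) * 2 ^ ((d : ℝ) / 2)) * Real.exp (-‖x‖) := by
  have hM : 0 ≤ M := nonneg_of_mul_nonneg_left ((abs_nonneg _).trans (hψ 0)) (Real.exp_pos _)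
  rcases ht.eq_or_lt with rfl | ht
  · rw [heatP_zero]
    refine (hψ x).trans (mul_le_mul_of_nonneg_right ?_ (Real.exp_pos _).le)
    exact le_mul_of_one_le_right hM
      (one_le_mul_of_one_le_of_one_le (Real.one_le_exp (mul_nonneg hα.le htT))
        (Real.one_le_rpow one_le_two (by positivity)))
  set K := Real.exp (α * T) * 2 ^ ((d : ℝ) / 2)
  have hpointwise : ∀ y, |heatKernel d α t (x - y) * ψ y| ≤
      M * K * Real.exp (-‖x‖) * heatKernel d α (2 * t) (x - y) := fun y => by
    have hweight : Real.exp (-‖y‖) ≤ Real.exp (-‖x‖) * Real.exp ‖x - y‖ := by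
      rw [← Real.exp_add, Real.exp_le_exp]
      linarith [norm_sub_norm_le x y]
    calc |heatKernel d α t (x - y) * ψ y|
        ≤ heatKernel d α t (x - y) * (M * (Real.exp (-‖x‖) * Real.exp ‖x - y‖)) := by
          rw [abs_mul, abs_of_nonneg (heatKernel_nonneg hα ht _)]
          gcongr
          · exact heatKernel_nonneg hα ht _
          · exact (hψ y).trans (by gcongr)
      _ = M * Real.exp (-‖x‖) * (heatKernel d α t (x - y) * Real.exp ‖x - y‖) := by ring
      _ ≤ M * Real.exp (-‖x‖) * (K * heatKernel d α (2 * t) (x - y)) :=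
          mul_le_mul_of_nonneg_left (heatKernel_mul_exp_norm_le hα ht htT _)
            (mul_nonneg hM (Real.exp_pos _).le)
      _ = M * K * Real.exp (-‖x‖) * heatKernel d α (2 * t) (x - y) := by ring
  have h2t : 0 < 2 * t := by positivity
  calc |heatP d α t ψ x|
      ≤ ∫ y, |heatKernel d α t (x - y) * ψ y| := by
        rw [heatP_eq_integral ht.ne']
        exact abs_integral_le_integral_abs
    _ ≤ ∫ y, M * K * Real.exp (-‖x‖) * heatKernel d α (2 * t) (x - y) :=
        integral_mono_of_nonneg (.of_forall fun _ => abs_nonneg _)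
          (((integrable_heatKernel hα h2t).comp_sub_left x).const_mul _)
          (.of_forall hpointwise)
    _ = M * K * Real.exp (-‖x‖) := by
        rw [integral_const_mul, integral_sub_left_eq_self (heatKernel d α (2 * t)) volume x,
          integral_heatKernel hα h2t, mul_one]

lemma HasCompactSupport.exists_abs_le_mul_exp_neg_norm {E : Type*} [SeminormedAddCommGroup E]
    {ψ : E → ℝ} (hcont : Continuous ψ) (hc : HasCompactSupport ψ) :
    ∃ M > 0, ∀ y, |ψ y| ≤ M * Real.exp (-‖y‖) := by
  obtain ⟨B, hB⟩ := (hcont.mul (Real.continuous_exp.comp continuous_norm))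
    |>.bounded_above_of_compact_support hc.mul_right
  refine ⟨max B 1, by positivity, fun y => ?_⟩
  have h : |ψ y| * Real.exp ‖y‖ ≤ max B 1 := by
    simpa [abs_mul] using (hB y).trans (le_max_left B 1)
  rwa [Real.exp_neg, ← div_eq_mul_inv, le_div_iff₀ (Real.exp_pos _)]

def IsTestFunction {d : ℕ} (ψ : Euc d → ℝ) : Prop :=
  ContDiff ℝ (⊤ : ℕ∞) ψ ∧ HasCompactSupport ψ

lemma IsTestFunction.pderivI {d : ℕ} {ψ : Euc d → ℝ} (hψ : IsTestFunction ψ) (i : Fin d) :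
    IsTestFunction (pderivI i ψ) :=
  ⟨(hψ.1.fderiv_right (m := (⊤ : ℕ∞)) le_rfl).clm_apply contDiff_const,
    hψ.2.fderiv_apply ℝ _⟩

lemma pderivI_heatP {d : ℕ} {α t : ℝ} {ψ : Euc d → ℝ} (hψ : IsTestFunction ψ) (i : Fin d) :
    pderivI i (heatP d α t ψ) = heatP d α t (pderivI i ψ) := by
  rcases eq_or_ne t 0 with rfl | ht
  · simp only [heatP_zero]
  ext x
  set L := ContinuousLinearMap.mul ℝ ℝ
  have hderiv := hψ.2.hasFDerivAt_convolution_left L (hψ.1.of_le (by simp))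
    ((continuous_heatKernel d α t).locallyIntegrable (μ := volume)) x
  have hintegrable : Integrable fun y =>
      L.precompL (Euc d) (fderiv ℝ ψ y) (heatKernel d α t (x - y)) := by
    refine Continuous.integrable_of_hasCompactSupport ?_ ?_
    · exact ((L.precompL (Euc d)).continuous.comp (hψ.1.continuous_fderiv (by simp))).clm_apply
        ((continuous_heatKernel d α t).comp (continuous_const.sub continuous_id))
    · exact (hψ.2.fderiv ℝ).mono fun y hy h0 => hy (by simp [h0])
  rw [pderivI, heatP_eq_convolution ht, hderiv.fderiv, heatP_eq_convolution ht, convolution_def,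
    convolution_def, ContinuousLinearMap.integral_apply hintegrable]
  rfl

lemma IsTestFunction.pderivIter {d : ℕ} {ψ : Euc d → ℝ} (hψ : IsTestFunction ψ) (i : Fin d)
    (n : ℕ) : IsTestFunction (pderivIter i n ψ) := by
  induction n with
  | zero => exact hψ
  | succ n ih => exact ih.pderivI i

lemma pderivIter_heatP {d : ℕ} {α t : ℝ} {ψ : Euc d → ℝ} (hψ : IsTestFunction ψ) (i : Fin d)
    (n : ℕ) : pderivIter i n (heatP d α t ψ) = heatP d α t (pderivIter i n ψ) := by
  induction n with
  | zero => rfl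
  | succ n ih => rw [pderivIter, ih, pderivI_heatP (hψ.pderivIter i n), pderivIter]

lemma IsTestFunction.foldr_pderivIter {d : ℕ} {ψ : Euc d → ℝ} (hψ : IsTestFunction ψ)
    (β : Fin d → ℕ) (l : List (Fin d)) :
    IsTestFunction (l.foldr (fun i g => _root_.pderivIter i (β i) g) ψ) := by
  induction l with
  | nil => exact hψ
  | cons i l ih => exact ih.pderivIter i (β i)

lemma foldr_pderivIter_heatP {d : ℕ} {α t : ℝ} {ψ : Euc d → ℝ} (hψ : IsTestFunction ψ)
    (β : Fin d → ℕ) (l : List (Fin d)) :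
    l.foldr (fun i g => pderivIter i (β i) g) (heatP d α t ψ) =
      heatP d α t (l.foldr (fun i g => pderivIter i (β i) g) ψ) := by
  induction l with
  | nil => rfl
  | cons i l ih =>
    rw [List.foldr_cons, List.foldr_cons, ih, pderivIter_heatP (hψ.foldr_pderivIter β l)]

lemma IsTestFunction.Dmulti {d : ℕ} {ψ : Euc d → ℝ} (hψ : IsTestFunction ψ) (β : Fin d → ℕ) :
    IsTestFunction (Dmulti β ψ) :=
  hψ.foldr_pderivIter β _

lemma Dmulti_heatP {d : ℕ} {α t : ℝ} {ψ : Euc d → ℝ} (hψ : IsTestFunction ψ) (β : Fin d → ℕ) :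
    Dmulti β (heatP d α t ψ) = heatP d α t (Dmulti β ψ) :=
  foldr_pderivIter_heatP hψ β _

theorem statement9_general (d : ℕ) (α : ℝ) (hα : 0 < α)
    (φ : Euc d → ℝ) (hφ : ContDiff ℝ (⊤ : ℕ∞) φ) (hsupp : HasCompactSupport φ)
    (T : ℝ) (β : Fin d → ℕ) :
    ∃ C > (0 : ℝ), ∀ t ∈ Set.Icc (0 : ℝ) T, ∀ x : Euc d,
      |Dmulti β (heatP d α t φ) x| ≤ C * Real.exp (-‖x‖) := by
  have hDφ : IsTestFunction (Dmulti β φ) := IsTestFunction.Dmulti ⟨hφ, hsupp⟩ β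
  obtain ⟨M, hM, hdecay⟩ :=
    hDφ.2.exists_abs_le_mul_exp_neg_norm hDφ.1.continuous
  refine ⟨M * (Real.exp (α * T) * 2 ^ ((d : ℝ) / 2)), by positivity, ?_⟩
  rintro t ⟨ht0, htT⟩ x
  rw [Dmulti_heatP ⟨hφ, hsupp⟩]
  exact abs_heatP_le_of_abs_le_mul_exp hα ht0 htT hdecay x

/-- for smooth compactly supported `φ`, `T > 0` and a multi-index `β`, there is
`C > 0` with `|D^β P_t φ(x)| ≤ C e^{-|x|}` for all `t ∈ [0,T]` and `x`. -/
theorem statement9 (d : ℕ) (hd : 1 ≤ d) (α : ℝ) (hα : 0 < α)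
    (φ : Euc d → ℝ) (hφ : ContDiff ℝ (⊤ : ℕ∞) φ) (hsupp : HasCompactSupport φ)
    (T : ℝ) (hT : 0 < T) (β : Fin d → ℕ) :
    ∃ C > (0 : ℝ), ∀ t ∈ Set.Icc (0 : ℝ) T, ∀ x : Euc d,
      |Dmulti β (heatP d α t φ) x| ≤ C * Real.exp (-‖x‖) :=
  statement9_general d α hα φ hφ hsupp T β
end
end

section
/- Let (μ_n)_{n≥1} and μ be tempered measures on ℝ^d such that ∫ φ dμ_n → ∫ φ dμ for every Schwartz function φ, and let A ⊂ ℝ^d be a bounded Borel set with μ(∂A) = 0, where ∂A denotes the topological boundary of A. Then lim_{n→∞} μ_n(A) = μ(A). -/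
open MeasureTheory Real Filter Set

noncomputable section

/-! Smooth compactly supported functions are Schwartz functions, so `∫ f dμₙ → ∫ f dμ` for
every smooth bump `f`. Squeezing smooth bumps between the indicators of a compact set `K` and an
open set `U ⊇ K`, and using that the locally finite measure `μ` is regular, gives
`limsup μₙ(K) ≤ μ(K)` for compact `K` and `μ(U) ≤ liminf μₙ(U)` for open `U`. Apply these to the
closure of `A`, compact since `A` is bounded, and to its interior: they differ by the `μ`-null
frontier. -/

open scoped ContDiff Manifold Topology

theorem exists_contDiff_hasCompactSupport_indicator_le_le_indicator {E : Type*}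
    [NormedAddCommGroup E] [NormedSpace ℝ E] [FiniteDimensional ℝ E] {K U : Set E}
    (hK : IsCompact K) (hU : IsOpen U) (hKU : K ⊆ U) :
    ∃ f : E → ℝ, ContDiff ℝ ∞ f ∧ HasCompactSupport f ∧ 0 ≤ f ∧
      K.indicator 1 ≤ (fun x => ENNReal.ofReal (f x)) ∧
      (fun x => ENNReal.ofReal (f x)) ≤ U.indicator 1 := by
  obtain ⟨V, hVo, hKV, hVU, hVc⟩ := exists_open_between_and_isCompact_closure hK hU hKU
  obtain ⟨f, hf, hrange, hfV, hf1⟩ :=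
    exists_contMDiff_support_eq_eq_one_iff 𝓘(ℝ, E) (n := ⊤) hVo hK.isClosed hKV
  have hf01 : ∀ x, f x ∈ Icc 0 1 := fun x => hrange (mem_range_self x)
  refine ⟨f, hf.contDiff, ?_, fun x => (hf01 x).1, fun x => ?_, fun x => ?_⟩
  · exact .of_support_subset_isCompact hVc (hfV ▸ subset_closure)
  · by_cases hx : x ∈ K
    · simp [hx, (hf1 x).1 hx]
    · simp [hx]
  · by_cases hx : x ∈ U
    · simpa [hx] using (hf01 x).2
    · have : f x = 0 := Function.notMem_support.1 fun h => hx (hVU (subset_closure (hfV ▸ h)))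
      simp [hx, this]

section SmoothTestFunctions

variable {E : Type*} [NormedAddCommGroup E] [NormedSpace ℝ E] [MeasurableSpace E]
  {ι : Type*} {l : Filter ι} {μs : ι → Measure E} {μ : Measure E}

theorem tendsto_lintegral_ofReal_of_tendsto_integral_schwartzMap
    (hμs : ∀ i, ∀ φ : SchwartzMap E ℝ, Integrable φ (μs i))
    (hμ : ∀ φ : SchwartzMap E ℝ, Integrable φ μ)
    (hconv : ∀ φ : SchwartzMap E ℝ, Tendsto (fun i => ∫ x, φ x ∂μs i) l (𝓝 (∫ x, φ x ∂μ)))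
    {f : E → ℝ} (hf : ContDiff ℝ ∞ f) (hfc : HasCompactSupport f) (hf0 : 0 ≤ f) :
    Tendsto (fun i => ∫⁻ x, ENNReal.ofReal (f x) ∂μs i) l (𝓝 (∫⁻ x, ENNReal.ofReal (f x) ∂μ)) := by
  let φ := hfc.toSchwartzMap hf
  have hlint : ∀ ν : Measure E, Integrable φ ν →
      ∫⁻ x, ENNReal.ofReal (f x) ∂ν = ENNReal.ofReal (∫ x, φ x ∂ν) := fun ν hν =>
    (ofReal_integral_eq_lintegral_ofReal hν (.of_forall hf0)).symm
  simp only [hlint _ (hμs _ φ), hlint μ (hμ φ)]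
  exact (ENNReal.continuous_ofReal.tendsto _).comp (hconv φ)

variable [FiniteDimensional ℝ E] [BorelSpace E] [l.NeBot]

theorem limsup_measure_le_of_isCompact [μ.OuterRegular]
    (hconv : ∀ f : E → ℝ, ContDiff ℝ ∞ f → HasCompactSupport f → 0 ≤ f →
      Tendsto (fun i => ∫⁻ x, ENNReal.ofReal (f x) ∂μs i) l (𝓝 (∫⁻ x, ENNReal.ofReal (f x) ∂μ)))
    {K : Set E} (hK : IsCompact K) :
    limsup (fun i => μs i K) l ≤ μ K := by
  rw [K.measure_eq_iInf_isOpen]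
  refine le_iInf fun U => le_iInf fun hKU => le_iInf fun hU => ?_
  obtain ⟨f, hf, hfc, hf0, hKf, hfU⟩ :=
    exists_contDiff_hasCompactSupport_indicator_le_le_indicator hK hU hKU
  calc limsup (fun i => μs i K) l
      ≤ limsup (fun i => ∫⁻ x, ENNReal.ofReal (f x) ∂μs i) l :=
        limsup_le_limsup (.of_forall fun i =>
          (lintegral_indicator_one hK.measurableSet).symm.trans_le (lintegral_mono hKf))
    _ = ∫⁻ x, ENNReal.ofReal (f x) ∂μ := (hconv f hf hfc hf0).limsup_eq
    _ ≤ μ U := (lintegral_mono hfU).trans_eq (lintegral_indicator_one hU.measurableSet)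

theorem le_liminf_measure_of_isOpen [μ.Regular]
    (hconv : ∀ f : E → ℝ, ContDiff ℝ ∞ f → HasCompactSupport f → 0 ≤ f →
      Tendsto (fun i => ∫⁻ x, ENNReal.ofReal (f x) ∂μs i) l (𝓝 (∫⁻ x, ENNReal.ofReal (f x) ∂μ)))
    {U : Set E} (hU : IsOpen U) :
    μ U ≤ liminf (fun i => μs i U) l := by
  rw [hU.measure_eq_iSup_isCompact]
  refine iSup_le fun K => iSup_le fun hKU => iSup_le fun hK => ?_
  obtain ⟨f, hf, hfc, hf0, hKf, hfU⟩ :=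
    exists_contDiff_hasCompactSupport_indicator_le_le_indicator hK hU hKU
  calc μ K ≤ ∫⁻ x, ENNReal.ofReal (f x) ∂μ :=
        (lintegral_indicator_one hK.measurableSet).symm.trans_le (lintegral_mono hKf)
    _ = liminf (fun i => ∫⁻ x, ENNReal.ofReal (f x) ∂μs i) l := (hconv f hf hfc hf0).liminf_eq.symm
    _ ≤ liminf (fun i => μs i U) l :=
        liminf_le_liminf (.of_forall fun i =>
          (lintegral_mono hfU).trans_eq (lintegral_indicator_one hU.measurableSet))

end SmoothTestFunctions

theorem statement10_general (d : ℕ)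
    (μn : ℕ → Measure (Euc d)) (μ : Measure (Euc d))
    (hμn : ∀ n, IsTempered (μn n)) (hμ : IsTempered μ)
    (hconv : ∀ φ : SchwartzMap (Euc d) ℝ,
      Tendsto (fun n => ∫ x, φ x ∂(μn n)) atTop (nhds (∫ x, φ x ∂μ)))
    (A : Set (Euc d)) (hAb : Bornology.IsBounded A)
    (hfr : μ (frontier A) = 0) :
    Tendsto (fun n => μn n A) atTop (nhds (μ A)) := by
  have : IsLocallyFiniteMeasure μ := hμ.1
  have htest := fun f => tendsto_lintegral_ofReal_of_tendsto_integral_schwartzMap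
    (f := f) (fun n => (hμn n).2) hμ.2 hconv
  exact tendsto_measure_of_le_liminf_measure_of_limsup_measure_le interior_subset subset_closure
    hfr (le_liminf_measure_of_isOpen htest isOpen_interior)
    (limsup_measure_le_of_isCompact htest hAb.isCompact_closure)

/-- Portmanteau theorem for tempered measures: if `μ_n → μ` against all Schwartz
functions and `A` is a bounded Borel set with `μ(∂A) = 0`, then `μ_n(A) → μ(A)`. -/
theorem statement10 (d : ℕ) (hd : 1 ≤ d)
    (μn : ℕ → Measure (Euc d)) (μ : Measure (Euc d))
    (hμn : ∀ n, IsTempered (μn n)) (hμ : IsTempered μ)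
    (hconv : ∀ φ : SchwartzMap (Euc d) ℝ,
      Tendsto (fun n => ∫ x, φ x ∂(μn n)) atTop (nhds (∫ x, φ x ∂μ)))
    (A : Set (Euc d)) (hA : MeasurableSet A) (hAb : Bornology.IsBounded A)
    (hfr : μ (frontier A) = 0) :
    Tendsto (fun n => μn n A) atTop (nhds (μ A)) :=
  statement10_general d μn μ hμn hμ hconv A hAb hfr
end
end

section
/- Let d ≥ 1 and t ≥ 1/2. Let (X_k)_{k≥1} be independent random vectors in ℝ^d, where X_k is Gaussian with mean √(ln k)·e₁ (e₁ = (1,0,…,0)) and covariance matrix t·I_d. Then almost surely X_k ∈ [0,1]^d for infinitely many k; in particular, almost surely the counting measure Σ_k δ_{X_k} assigns infinite mass to the unit cube [0,1]^d. -/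
/-! For `x ∈ [0,1]^d` and a mean `m` with nonnegative coordinates, `‖x - m‖² ≤ d + ‖m‖²`, so the
Gaussian density of `X_k` is at least `(2πt)^{-d/2} e^{-d/(2t)} (k+1)^{-1/(2t)}` on the cube, which
has volume one. For `t ≥ 1/2` this dominates a multiple of the harmonic series, so the second
Borel–Cantelli lemma applies to the independent events `{X_k ∈ [0,1]^d}`. -/

open MeasureTheory ProbabilityTheory Real Filter Set

noncomputable section

open scoped ENNReal

section UnitCube

variable {d : ℕ}

lemma measurableSet_unitCube : MeasurableSet (unitCube d) := by
  have : unitCube d = ⋂ i, (fun x : Euc d => x i) ⁻¹' Icc 0 1 := by ext; simp [unitCube]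
  rw [this]
  exact .iInter fun i => (EuclideanSpace.proj (𝕜 := ℝ) i).continuous.measurable measurableSet_Icc

lemma volume_unitCube : volume (unitCube d) = 1 := by
  have : unitCube d = (MeasurableEquiv.toLp 2 (Fin d → ℝ)).symm ⁻¹' univ.pi fun _ => Icc 0 1 := by
    ext x; exact ⟨fun h i _ => h i, fun h i => h i trivial⟩
  rw [this, (EuclideanSpace.volume_preserving_symm_measurableEquiv_toLp (Fin d)).measure_preimage
    (MeasurableSet.univ_pi fun _ => measurableSet_Icc).nullMeasurableSet, volume_pi_pi]
  simp

lemma norm_sq_le_of_mem_unitCube {x : Euc d} (hx : x ∈ unitCube d) : ‖x‖ ^ 2 ≤ d := by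
  rw [EuclideanSpace.norm_sq_eq]
  calc ∑ i, ‖x i‖ ^ 2 ≤ ∑ _ : Fin d, (1 : ℝ) := by
        gcongr with i
        rw [Real.norm_eq_abs, sq_abs]
        exact pow_le_one₀ (hx i).1 (hx i).2
    _ = d := by simp

lemma norm_sub_sq_le_of_mem_unitCube {x m : Euc d} (hx : x ∈ unitCube d) (hm : ∀ i, 0 ≤ m i) :
    ‖x - m‖ ^ 2 ≤ d + ‖m‖ ^ 2 := by
  have hinner : 0 ≤ inner ℝ x m := by
    rw [EuclideanSpace.inner_eq_star_dotProduct]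
    exact Finset.sum_nonneg fun i _ => mul_nonneg (hm i) (hx i).1
  rw [norm_sub_sq_real]
  linarith [norm_sq_le_of_mem_unitCube hx]

end UnitCube

lemma ofReal_le_gaussE_unitCube {d : ℕ} {m : Euc d} {t : ℝ} (ht : 0 ≤ t) (hm : ∀ i, 0 ≤ m i) :
    ENNReal.ofReal ((2 * π * t) ^ (-(d : ℝ) / 2) * exp (-(d + ‖m‖ ^ 2) / (2 * t))) ≤
      gaussE d m t (unitCube d) := by
  rw [gaussE, withDensity_apply _ measurableSet_unitCube]
  calc _ = ∫⁻ _ in unitCube d,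
        ENNReal.ofReal ((2 * π * t) ^ (-(d : ℝ) / 2) * exp (-(d + ‖m‖ ^ 2) / (2 * t))) := by
        rw [setLIntegral_const, volume_unitCube, mul_one]
    _ ≤ _ := setLIntegral_mono' measurableSet_unitCube fun x hx => by
        gcongr
        exact norm_sub_sq_le_of_mem_unitCube hx hm

lemma inv_le_exp_neg_log_div {a t : ℝ} (ha : 1 ≤ a) (ht : 1 / 2 ≤ t) :
    a⁻¹ ≤ exp (-log a / (2 * t)) := by
  rw [← exp_log (by linarith : 0 < a), ← exp_neg, log_exp]
  gcongr
  rw [neg_div, neg_le_neg_iff]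
  exact div_le_self (log_nonneg ha) (by linarith)

lemma norm_sqrt_smul_single_sq {d : ℕ} (i : Fin d) {L : ℝ} (hL : 0 ≤ L) :
    ‖√L • EuclideanSpace.single i (1 : ℝ)‖ ^ 2 = L := by
  rw [norm_smul, PiLp.norm_single, norm_one, mul_one, norm_of_nonneg (sqrt_nonneg L),
    sq_sqrt hL]

lemma ofReal_mul_inv_le_gaussE_unitCube {d : ℕ} (i : Fin d) {t : ℝ} (ht : 1 / 2 ≤ t)
    {a : ℝ} (ha : 1 ≤ a) :
    ENNReal.ofReal ((2 * π * t) ^ (-(d : ℝ) / 2) * exp (-d / (2 * t)) * a⁻¹) ≤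
      gaussE d (√(log a) • EuclideanSpace.single i 1) t (unitCube d) := by
  have hm : ∀ j, 0 ≤ (√(log a) • EuclideanSpace.single i (1 : ℝ)) j := fun j => by
    rw [PiLp.smul_apply, PiLp.single_apply]
    split_ifs <;> simp
  refine le_trans (ENNReal.ofReal_le_ofReal ?_) (ofReal_le_gaussE_unitCube (by linarith) hm)
  rw [norm_sqrt_smul_single_sq i (log_nonneg ha), neg_add, add_div, exp_add, mul_assoc]
  gcongr
  exact inv_le_exp_neg_log_div ha ht

lemma tsum_ofReal_mul_inv_succ_eq_top {C : ℝ} (hC : 0 < C) :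
    ∑' k : ℕ, ENNReal.ofReal (C * ((k : ℝ) + 1)⁻¹) = ∞ := by
  by_contra h
  have hsum : Summable fun k : ℕ => C * ((k : ℝ) + 1)⁻¹ := by
    refine (ENNReal.summable_toReal h).congr fun k => ENNReal.toReal_ofReal ?_
    positivity
  refine not_summable_natCast_inv ((summable_nat_add_iff 1).mp ?_)
  simpa [hC.ne'] using hsum.mul_left C⁻¹

lemma ae_infinite_setOf_mem_of_tsum_eq_top {Ω β : Type*} [MeasurableSpace Ω] [MeasurableSpace β]
    {μ : Measure Ω} {X : ℕ → Ω → β} (hX : ∀ k, Measurable (X k)) (hindep : iIndepFun X μ)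
    {s : Set β} (hs : MeasurableSet s) (hsum : ∑' k, μ (X k ⁻¹' s) = ∞) :
    ∀ᵐ ω ∂μ, {k | X k ω ∈ s}.Infinite := by
  have := hindep.isProbabilityMeasure
  have hsets : iIndepSet (fun k => X k ⁻¹' s) μ :=
    (iIndepSet_iff_meas_biInter fun k => hX k hs).2 fun S =>
      hindep.measure_inter_preimage_eq_mul S fun _ _ => hs
  have hlimsup : ∀ᵐ ω ∂μ, ω ∈ limsup (fun k => X k ⁻¹' s) atTop := by
    rw [ae_mem_iff_measure_eq
        (MeasurableSet.measurableSet_limsup fun k => hX k hs).nullMeasurableSet,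
      measure_limsup_eq_one (fun k => hX k hs) hsets hsum, measure_univ]
  filter_upwards [hlimsup] with ω hω
  exact Nat.frequently_atTop_iff_infinite.mp (mem_limsup_iff_frequently_mem.mp hω)

lemma MeasureTheory.Measure.sum_dirac_apply {ι α : Type*} [MeasurableSpace α] (f : ι → α)
    {s : Set α} (hs : MeasurableSet s) :
    Measure.sum (fun i => dirac (f i)) s = (f ⁻¹' s).encard := by
  rw [Measure.sum_apply _ hs, ← ENNReal.tsum_set_one, tsum_subtype (f ⁻¹' s) fun _ => (1 : ℝ≥0∞)]
  congr with i
  rw [Measure.dirac_apply' _ hs]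
  exact indicator_comp_right f (g := 1) (s := s) |>.symm

theorem statement12_general (d : ℕ) (hd : 1 ≤ d) (t : ℝ) (ht : 1 / 2 ≤ t)
    (Ω : Type*) [MeasureSpace Ω]
    (X : ℕ → Ω → Euc d) (hmeas : ∀ k, Measurable (X k))
    (hindep : ProbabilityTheory.iIndepFun X ℙ)
    (hlaw : ∀ k : ℕ, Measure.map (X k) ℙ =
      gaussE d (Real.sqrt (Real.log ((k : ℝ) + 1)) •
        EuclideanSpace.single (⟨0, hd⟩ : Fin d) 1) t) :
    ∀ᵐ ω ∂(ℙ : Measure Ω), {k : ℕ | X k ω ∈ unitCube d}.Infinite ∧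
      (Measure.sum fun k => Measure.dirac (X k ω)) (unitCube d) = ⊤ := by
  set C := (2 * π * t) ^ (-(d : ℝ) / 2) * exp (-d / (2 * t))
  have hC : 0 < C := mul_pos (rpow_pos_of_pos (by positivity) _) (exp_pos _)
  have hprob (k : ℕ) : ENNReal.ofReal (C * ((k : ℝ) + 1)⁻¹) ≤ ℙ (X k ⁻¹' unitCube d) := by
    rw [← Measure.map_apply (hmeas k) measurableSet_unitCube, hlaw k]
    exact ofReal_mul_inv_le_gaussE_unitCube _ ht (le_add_of_nonneg_left k.cast_nonneg)
  have hsum : ∑' k, ℙ (X k ⁻¹' unitCube d) = ∞ :=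
    top_le_iff.mp (tsum_ofReal_mul_inv_succ_eq_top hC ▸ ENNReal.tsum_le_tsum hprob)
  filter_upwards [ae_infinite_setOf_mem_of_tsum_eq_top hmeas hindep measurableSet_unitCube hsum]
    with ω hω
  refine ⟨hω, ?_⟩
  rw [Measure.sum_dirac_apply _ measurableSet_unitCube]
  simpa [Set.encard_eq_top_iff, preimage] using hω

/-- if `(X_k)_{k ≥ 1}` are independent Gaussian vectors in `ℝ^d` with means
`√(ln k)·e₁` and covariance `t·I_d` for `t ≥ 1/2` (here indexed by `k : ℕ`, with `X k` the
`(k+1)`-st vector), then almost surely infinitely many of them lie in the unit cube; in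
particular the counting measure `Σ_k δ_{X_k}` almost surely gives infinite mass to `[0,1]^d`. -/
theorem statement12 (d : ℕ) (hd : 1 ≤ d) (t : ℝ) (ht : 1 / 2 ≤ t)
    (Ω : Type*) [MeasureSpace Ω] [IsProbabilityMeasure (ℙ : Measure Ω)]
    (X : ℕ → Ω → Euc d) (hmeas : ∀ k, Measurable (X k))
    (hindep : ProbabilityTheory.iIndepFun X ℙ)
    (hlaw : ∀ k : ℕ, Measure.map (X k) ℙ =
      gaussE d (Real.sqrt (Real.log ((k : ℝ) + 1)) •
        EuclideanSpace.single (⟨0, hd⟩ : Fin d) 1) t) :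
    ∀ᵐ ω ∂(ℙ : Measure Ω), {k : ℕ | X k ω ∈ unitCube d}.Infinite ∧
      (Measure.sum fun k => Measure.dirac (X k ω)) (unitCube d) = ⊤ :=
  statement12_general d hd t ht Ω X hmeas hindep hlaw
end
end

section
/- There exists a strictly positive Schwartz function κ on ℝ^d with κ(x) = e^{-|x|} for all x with |x| > 1; moreover, for any such κ there exists a constant C > 0 such that |∇κ(x)|² ≤ C κ(x) and |Δκ(x)| ≤ C κ(x) for all x ∈ ℝ^d. -/
open MeasureTheory Real Filter Set

noncomputable section

/-!
Take `κ = exp (-ρ)` with `ρ x = η (‖x‖²)`, where `η` is smooth, vanishes on `(-∞, 1/2]` and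
equals `√t` on `[1, ∞)`. Then `ρ` has temperate growth and `ρ x ≥ ‖x‖ - 1`, so by Faà di Bruno
every derivative of `κ` is at most a polynomial times `exp (-‖x‖)`: `κ` is a Schwartz function.

For any such `κ`, the two bounds hold on the unit ball by compactness and positivity of `κ`.
Outside it, with `r = ‖x‖`, one computes `‖∇κ x‖ = e^{-r}` and
`Δκ x = e^{-r} (1 + (1 - d) / r)`, both at most a constant times `κ x = e^{-r}`.
-/

open scoped ContDiff Topology

lemma one_add_pow_mul_exp_neg_le (m : ℕ) {r : ℝ} (hr : 0 ≤ r) :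
    (1 + r) ^ m * exp (-r) ≤ exp 1 * m.factorial := by
  have h := pow_div_factorial_le_exp (x := 1 + r) (by linarith) m
  rw [div_le_iff₀ (by positivity)] at h
  calc (1 + r) ^ m * exp (-r) ≤ exp (1 + r) * m.factorial * exp (-r) := by gcongr
    _ = exp 1 * m.factorial := by
      rw [exp_add, mul_right_comm, mul_assoc (exp 1), ← exp_add, add_neg_cancel, exp_zero,
        mul_one]

lemma norm_iteratedFDeriv_exp (n : ℕ) (y : ℝ) : ‖iteratedFDeriv ℝ n exp y‖ = exp y := by
  rw [norm_iteratedFDeriv_eq_norm_iteratedDeriv, iteratedDeriv_eq_iterate, iter_deriv_exp,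
    norm_of_nonneg (exp_pos y).le]

def smoothSqrt (t : ℝ) : ℝ := smoothTransition (2 * t - 1) * √t

lemma smoothSqrt_of_one_le {t : ℝ} (ht : 1 ≤ t) : smoothSqrt t = √t := by
  rw [smoothSqrt, smoothTransition.one_of_one_le (by linarith), one_mul]

lemma smoothSqrt_nonneg (t : ℝ) : 0 ≤ smoothSqrt t :=
  mul_nonneg (smoothTransition.nonneg _) (sqrt_nonneg t)

lemma smoothSqrt_eventuallyEq_zero {t : ℝ} (ht : t < 1 / 2) : smoothSqrt =ᶠ[𝓝 t] fun _ => 0 := by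
  filter_upwards [Iio_mem_nhds ht] with s hs
  rw [smoothSqrt, smoothTransition.zero_of_nonpos (by linarith [mem_Iio.1 hs]), zero_mul]

lemma smoothSqrt_eventuallyEq_rpow {t : ℝ} (ht : 1 < t) :
    smoothSqrt =ᶠ[𝓝 t] fun s => s ^ (1 / 2 : ℝ) := by
  filter_upwards [Ioi_mem_nhds ht] with s hs
  rw [smoothSqrt_of_one_le (le_of_lt hs), sqrt_eq_rpow]

lemma contDiff_smoothSqrt : ContDiff ℝ ∞ smoothSqrt := by
  refine contDiff_iff_contDiffAt.2 fun t => ?_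
  rcases lt_or_ge t (1 / 2) with ht | ht
  · exact contDiffAt_const.congr_of_eventuallyEq (smoothSqrt_eventuallyEq_zero ht)
  · exact (smoothTransition.contDiffAt.comp t (by fun_prop)).mul
      (contDiffAt_sqrt (by linarith))

lemma hasTemperateGrowth_smoothSqrt : smoothSqrt.HasTemperateGrowth := by
  refine ⟨contDiff_smoothSqrt, fun n => ?_⟩
  obtain ⟨M, hM⟩ := (isCompact_Icc (a := 1 / 2) (b := 1)).exists_bound_of_continuousOn
    (contDiff_smoothSqrt.continuous_iteratedDeriv n (mod_cast le_top)).continuousOn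
  set P := ‖(descPochhammer ℝ n).eval (1 / 2 : ℝ)‖
  have hM0 : 0 ≤ M := (norm_nonneg _).trans (hM 1 (by norm_num))
  refine ⟨1, M + P, fun t => ?_⟩
  rw [norm_iteratedFDeriv_eq_norm_iteratedDeriv, pow_one]
  have hP : 0 ≤ P := norm_nonneg _
  have h1 : 1 ≤ 1 + ‖t‖ := le_add_of_nonneg_right (norm_nonneg t)
  rcases lt_or_ge t (1 / 2) with ht | ht
  · rw [(smoothSqrt_eventuallyEq_zero ht).iteratedDeriv_eq, iteratedDeriv_fun_const_zero,
      norm_zero]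
    positivity
  rcases le_or_gt t 1 with ht' | ht'
  · nlinarith [hM t ⟨ht, ht'⟩]
  · rw [(smoothSqrt_eventuallyEq_rpow ht').iteratedDeriv_eq, iteratedDeriv_eq_iterate,
      iter_deriv_rpow_const, norm_mul]
    have ht0 : 0 < t := by linarith
    have hpow : ‖t ^ (1 / 2 - n : ℝ)‖ ≤ 1 + ‖t‖ := by
      rw [norm_of_nonneg (by positivity), norm_of_nonneg ht0.le]
      calc t ^ (1 / 2 - n : ℝ) ≤ t ^ (1 : ℝ) :=
            rpow_le_rpow_of_exponent_le ht'.le (by linarith [n.cast_nonneg (α := ℝ)])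
        _ ≤ 1 + t := by rw [rpow_one]; linarith
    calc P * ‖t ^ (1 / 2 - n : ℝ)‖ ≤ P * (1 + ‖t‖) := by gcongr
      _ ≤ (M + P) * (1 + ‖t‖) := by gcongr; linarith

section TemperateGrowth

variable {E : Type*} [NormedAddCommGroup E] [NormedSpace ℝ E]

lemma Function.HasTemperateGrowth.norm_iteratedFDeriv_exp_neg_le {ρ : E → ℝ}
    (hρ : ρ.HasTemperateGrowth) (n : ℕ) : ∃ (k : ℕ) (C : ℝ), ∀ x,
      ‖iteratedFDeriv ℝ n (fun x => exp (-ρ x)) x‖ ≤ C * (1 + ‖x‖) ^ k * exp (-ρ x) := by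
  obtain ⟨k, C, -, hC⟩ := hρ.norm_iteratedFDeriv_le_uniform n
  refine ⟨k * n, n.factorial * max 1 C ^ n, fun x => ?_⟩
  set D := max 1 C * (1 + ‖x‖) ^ k
  have hD : 1 ≤ D := one_le_mul_of_one_le_of_one_le (le_max_left _ _)
    (one_le_pow₀ (le_add_of_nonneg_right (norm_nonneg x)))
  have hderiv : ∀ i, 1 ≤ i → i ≤ n → ‖iteratedFDeriv ℝ i (-ρ) x‖ ≤ D ^ i := by
    intro i hi hin
    rw [iteratedFDeriv_neg_apply, norm_neg]
    calc ‖iteratedFDeriv ℝ i ρ x‖ ≤ C * (1 + ‖x‖) ^ k := hC i hin x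
      _ ≤ D := mul_le_mul_of_nonneg_right (le_max_right _ _) (by positivity)
      _ ≤ D ^ i := le_self_pow₀ hD (by omega)
  have := norm_iteratedFDeriv_comp_le (g := exp) (f := -ρ) contDiff_exp
    (hρ.1.neg) (mod_cast le_top) x (fun i _ => (norm_iteratedFDeriv_exp i _).le) hderiv
  calc _ ≤ n.factorial * exp (-ρ x) * D ^ n := this
    _ = _ := by rw [mul_pow, ← pow_mul]; ring

lemma Function.HasTemperateGrowth.exists_schwartzMap_eq_exp_neg {ρ : E → ℝ}
    (hρ : ρ.HasTemperateGrowth) {c : ℝ} (hc : ∀ x, ‖x‖ - c ≤ ρ x) :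
    ∃ κ : SchwartzMap E ℝ, ∀ x, κ x = exp (-ρ x) := by
  refine ⟨⟨fun x => exp (-ρ x), contDiff_exp.comp hρ.1.neg, fun m n => ?_⟩, fun _ => rfl⟩
  obtain ⟨k, C, hC⟩ := hρ.norm_iteratedFDeriv_exp_neg_le n
  refine ⟨max C 0 * exp c * (exp 1 * (m + k).factorial), fun x => ?_⟩
  have hx : 0 ≤ ‖x‖ := norm_nonneg x
  have hexp : exp (-ρ x) ≤ exp c * exp (-‖x‖) := by
    rw [← exp_add]; exact exp_le_exp.2 (by linarith [hc x])
  calc ‖x‖ ^ m * ‖iteratedFDeriv ℝ n (fun x => exp (-ρ x)) x‖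
      ≤ (1 + ‖x‖) ^ m * (max C 0 * (1 + ‖x‖) ^ k * (exp c * exp (-‖x‖))) := by
        gcongr
        · linarith
        · exact (hC x).trans (by gcongr; exact le_max_left _ _)
    _ = max C 0 * exp c * ((1 + ‖x‖) ^ (m + k) * exp (-‖x‖)) := by ring
    _ ≤ _ := mul_le_mul_of_nonneg_left (one_add_pow_mul_exp_neg_le _ hx) (by positivity)

end TemperateGrowth

lemma IsCompact.exists_abs_le_mul {X : Type*} [TopologicalSpace X] {K : Set X}
    (hK : IsCompact K) {f g : X → ℝ} (hf : ContinuousOn f K) (hg : ContinuousOn g K)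
    (hpos : ∀ x ∈ K, 0 < g x) : ∃ C, 0 ≤ C ∧ ∀ x ∈ K, |f x| ≤ C * g x := by
  obtain ⟨C, hC⟩ := hK.exists_bound_of_continuousOn (hf.div hg fun x hx => (hpos x hx).ne')
  refine ⟨max C 0, le_max_right _ _, fun x hx => ?_⟩
  have hgx := hpos x hx
  calc |f x| = ‖f x / g x‖ * g x := by
        rw [norm_div, norm_of_nonneg hgx.le, div_mul_cancel₀ _ hgx.ne', norm_eq_abs]
    _ ≤ max C 0 * g x := by gcongr; exact (hC x hx).trans (le_max_left _ _)

section InnerProductSpace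

variable {E : Type*} [NormedAddCommGroup E] [InnerProductSpace ℝ E]

lemma exists_schwartzMap_pos_eq_exp_neg_norm :
    ∃ κ : SchwartzMap E ℝ, (∀ x, 0 < κ x) ∧ ∀ x, 1 ≤ ‖x‖ → κ x = exp (-‖x‖) := by
  have hρ : (fun x : E => smoothSqrt (‖x‖ ^ 2)).HasTemperateGrowth :=
    hasTemperateGrowth_smoothSqrt.comp (Function.hasTemperateGrowth_norm_sq E)
  have hρ_eq : ∀ x : E, 1 ≤ ‖x‖ → smoothSqrt (‖x‖ ^ 2) = ‖x‖ := fun x hx => by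
    rw [smoothSqrt_of_one_le (one_le_pow₀ hx), sqrt_sq (norm_nonneg x)]
  have hρ_ge : ∀ x : E, ‖x‖ - 1 ≤ smoothSqrt (‖x‖ ^ 2) := fun x => by
    rcases le_or_gt 1 ‖x‖ with hx | hx
    · rw [hρ_eq x hx]; linarith
    · linarith [smoothSqrt_nonneg (‖x‖ ^ 2)]
  obtain ⟨κ, hκ⟩ := hρ.exists_schwartzMap_eq_exp_neg hρ_ge
  exact ⟨κ, fun x => hκ x ▸ exp_pos _, fun x hx => by rw [hκ, hρ_eq x hx]⟩

lemma hasFDerivAt_norm {x : E} (hx : x ≠ 0) :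
    HasFDerivAt (fun y : E => ‖y‖) (‖x‖⁻¹ • innerSL ℝ x) x := by
  have h := (hasStrictFDerivAt_norm_sq x).hasFDerivAt.sqrt (pow_ne_zero 2 (norm_ne_zero_iff.2 hx))
  simp only [sqrt_sq (norm_nonneg _)] at h
  convert h using 1
  ext y
  simp only [smul_apply, innerSL_apply_apply, smul_eq_mul, nsmul_eq_mul]
  ring

lemma hasFDerivAt_of_eq_exp_neg_norm {f : E → ℝ} (hf : ∀ y, 1 < ‖y‖ → f y = exp (-‖y‖))
    {x : E} (hx : 1 < ‖x‖) :
    HasFDerivAt f (-(exp (-‖x‖) * ‖x‖⁻¹) • innerSL ℝ x) x := by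
  have hx0 : x ≠ 0 := norm_pos_iff.1 (by linarith)
  have h := (hasDerivAt_exp (-‖x‖)).comp_hasFDerivAt x (hasFDerivAt_norm hx0).neg
  refine (h.congr_of_eventuallyEq ?_).congr_fderiv ?_
  · filter_upwards [(isOpen_lt continuous_const continuous_norm).mem_nhds hx] with y hy
    exact hf y hy
  · rw [smul_neg, ← neg_smul, smul_smul, neg_mul]

lemma ContDiff.continuous_gradient [CompleteSpace E] {f : E → ℝ} (hf : ContDiff ℝ 1 f) :
    Continuous (gradient f) :=
  (InnerProductSpace.toDual ℝ E).symm.continuous.comp (hf.continuous_fderiv one_ne_zero)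

lemma norm_gradient_of_eq_exp_neg_norm [CompleteSpace E] {f : E → ℝ}
    (hf : ∀ y, 1 < ‖y‖ → f y = exp (-‖y‖)) {x : E} (hx : 1 < ‖x‖) :
    ‖gradient f x‖ = exp (-‖x‖) := by
  rw [gradient, LinearIsometryEquiv.norm_map, (hasFDerivAt_of_eq_exp_neg_norm hf hx).fderiv,
    norm_smul, innerSL_apply_norm, norm_neg, norm_mul, norm_inv, norm_norm,
    norm_of_nonneg (exp_pos _).le, inv_mul_cancel_right₀ (by positivity)]

end InnerProductSpace

lemma ContDiff.continuous_lap {d : ℕ} {f : Euc d → ℝ} (hf : ContDiff ℝ 2 f) :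
    Continuous (lap d f) := by
  refine continuous_finsetSum _ fun i _ => ?_
  have h : ContDiff ℝ 1 fun y => fderiv ℝ f y (EuclideanSpace.single i 1) :=
    (hf.fderiv_right (by norm_num)).clm_apply contDiff_const
  exact (h.continuous_fderiv one_ne_zero).clm_apply continuous_const

lemma lap_of_eq_exp_neg_norm {d : ℕ} {f : Euc d → ℝ} (hf : ∀ y, 1 < ‖y‖ → f y = exp (-‖y‖))
    {x : Euc d} (hx : 1 < ‖x‖) :
    lap d f x = exp (-‖x‖) * (1 + (1 - d) / ‖x‖) := by
  have hx0 : x ≠ 0 := norm_pos_iff.1 (by linarith)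
  have hr : ‖x‖ ≠ 0 := norm_ne_zero_iff.2 hx0
  set ψ : ℝ → ℝ := fun r => -(exp (-r) * r⁻¹)
  set ψ' := exp (-‖x‖) * ‖x‖⁻¹ + exp (-‖x‖) * (‖x‖ ^ 2)⁻¹
  have hψ : HasDerivAt ψ ψ' ‖x‖ := by
    have h : HasDerivAt (fun r => -(exp (-r) * r⁻¹)) _ ‖x‖ :=
      (((hasDerivAt_neg ‖x‖).exp).mul (hasDerivAt_inv hr)).neg
    convert h using 1
    simp only [ψ']
    ring
  have hpartial : ∀ i, fderiv ℝ (fun y => fderiv ℝ f y (EuclideanSpace.single i 1)) x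
      (EuclideanSpace.single i 1) = ψ' * ‖x‖⁻¹ * x i ^ 2 + ψ ‖x‖ := by
    intro i
    have hev : (fun y => fderiv ℝ f y (EuclideanSpace.single i 1)) =ᶠ[𝓝 x]
        fun y => ψ ‖y‖ * y i := by
      filter_upwards [(isOpen_lt continuous_const continuous_norm).mem_nhds hx] with y hy
      rw [(hasFDerivAt_of_eq_exp_neg_norm hf hy).fderiv]
      simp [ψ, EuclideanSpace.inner_single_right]
    have hd : HasFDerivAt (fun y : Euc d => ψ ‖y‖ * y i) _ x :=
      (hψ.comp_hasFDerivAt x (hasFDerivAt_norm hx0)).mul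
        (EuclideanSpace.proj (𝕜 := ℝ) i).hasFDerivAt
    rw [hev.fderiv_eq, hd.fderiv]
    simp only [Function.comp_apply, add_apply, smul_apply, PiLp.proj_apply,
      PiLp.single_eq_same, smul_eq_mul, mul_one, coe_innerSL_apply,
      EuclideanSpace.inner_single_right, ringHom_apply, one_mul]
    ring
  have hsum : ∑ i, x i ^ 2 = ‖x‖ ^ 2 := by
    simp [EuclideanSpace.norm_sq_eq]
  simp only [lap, hpartial, Finset.sum_add_distrib, ← Finset.mul_sum, hsum, Finset.sum_const,
    Finset.card_univ, Fintype.card_fin, nsmul_eq_mul, ψ, ψ']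
  field_simp
  ring

lemma abs_one_add_sub_div_le (d : ℕ) {r : ℝ} (hr : 1 ≤ r) : |1 + (1 - d) / r| ≤ d + 2 :=
  calc |1 + (1 - d) / r| ≤ |1| + |(1 - d) / r| := abs_add_le _ _
    _ = 1 + |1 - (d : ℝ)| / r := by rw [abs_one, abs_div, abs_of_pos (a := r) (by linarith)]
    _ ≤ 1 + |1 - (d : ℝ)| := by gcongr; exact div_le_self (abs_nonneg _) hr
    _ ≤ d + 2 := by
      have : |1 - (d : ℝ)| ≤ d + 1 :=
        abs_sub_le_iff.2 ⟨by linarith [d.cast_nonneg (α := ℝ)], by linarith⟩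
      linarith

lemma exists_bound_of_eq_exp_neg_norm {d : ℕ} {κ : Euc d → ℝ} (hκ : ContDiff ℝ 2 κ)
    (hpos : ∀ x, 0 < κ x) (hout : ∀ x, 1 < ‖x‖ → κ x = exp (-‖x‖)) :
    ∃ C > 0, ∀ x, ‖gradient κ x‖ ^ 2 ≤ C * κ x ∧ |lap d κ x| ≤ C * κ x := by
  have hK := isCompact_closedBall (0 : Euc d) 1
  obtain ⟨C₁, hC₁, h₁⟩ := hK.exists_abs_le_mul
    ((hκ.of_le one_le_two).continuous_gradient.norm.pow 2).continuousOn
    hκ.continuous.continuousOn fun x _ => hpos x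
  obtain ⟨C₂, hC₂, h₂⟩ := hK.exists_abs_le_mul hκ.continuous_lap.continuousOn
    hκ.continuous.continuousOn fun x _ => hpos x
  refine ⟨C₁ + C₂ + (d + 2), by positivity, fun x => ?_⟩
  rcases le_or_gt ‖x‖ 1 with hx | hx
  · have hxK : x ∈ Metric.closedBall 0 1 := mem_closedBall_zero_iff.2 hx
    have hκx := hpos x
    constructor
    · calc ‖gradient κ x‖ ^ 2 ≤ C₁ * κ x := (le_abs_self _).trans (h₁ x hxK)
        _ ≤ _ := by gcongr; linarith [d.cast_nonneg (α := ℝ)]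
    · calc |lap d κ x| ≤ C₂ * κ x := h₂ x hxK
        _ ≤ _ := by gcongr; linarith [d.cast_nonneg (α := ℝ)]
  · have he := exp_pos (-‖x‖)
    rw [hout x hx, norm_gradient_of_eq_exp_neg_norm hout hx, lap_of_eq_exp_neg_norm hout hx,
      abs_mul, abs_of_pos he]
    constructor
    · have he1 : exp (-‖x‖) ≤ 1 := exp_le_one_iff.2 (by linarith)
      calc exp (-‖x‖) ^ 2 ≤ 1 * exp (-‖x‖) := by rw [sq]; gcongr
        _ ≤ _ := by gcongr; linarith [d.cast_nonneg (α := ℝ)]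
    · rw [mul_comm]
      gcongr
      linarith [abs_one_add_sub_div_le d hx.le]

theorem statement17_general (d : ℕ) :
    (∃ κ : SchwartzMap (Euc d) ℝ, (∀ x, 0 < κ x) ∧
      ∀ x, 1 < ‖x‖ → κ x = Real.exp (-‖x‖)) ∧
    (∀ κ : SchwartzMap (Euc d) ℝ, (∀ x, 0 < κ x) →
      (∀ x, 1 < ‖x‖ → κ x = Real.exp (-‖x‖)) →
      ∃ C > (0 : ℝ), ∀ x,
        ‖gradient (fun y => κ y) x‖ ^ 2 ≤ C * κ x ∧
        |lap d (fun y => κ y) x| ≤ C * κ x) := by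
  refine ⟨?_, fun κ hpos hout => exists_bound_of_eq_exp_neg_norm (κ.smooth 2) hpos hout⟩
  obtain ⟨κ, hpos, heq⟩ := exists_schwartzMap_pos_eq_exp_neg_norm (E := Euc d)
  exact ⟨κ, hpos, fun x hx => heq x hx.le⟩

/-- there is a strictly positive Schwartz function `κ` on `ℝ^d` with
`κ(x) = e^{-|x|}` for `|x| > 1`; moreover for any such `κ` there is `C > 0` with
`|∇κ|² ≤ C κ` and `|Δκ| ≤ C κ` everywhere. -/
theorem statement17 (d : ℕ) (hd : 1 ≤ d) :
    (∃ κ : SchwartzMap (Euc d) ℝ, (∀ x, 0 < κ x) ∧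
      ∀ x, 1 < ‖x‖ → κ x = Real.exp (-‖x‖)) ∧
    (∀ κ : SchwartzMap (Euc d) ℝ, (∀ x, 0 < κ x) →
      (∀ x, 1 < ‖x‖ → κ x = Real.exp (-‖x‖)) →
      ∃ C > (0 : ℝ), ∀ x,
        ‖gradient (fun y => κ y) x‖ ^ 2 ≤ C * κ x ∧
        |lap d (fun y => κ y) x| ≤ C * κ x) :=
  statement17_general d
end
end
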